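/- arXiv:2010.05415 — 6 statements merged into one kernel-verified Lean document; each statement's English description precedes it below -/
import Mathlib

section
/- Let n be a positive integer, k a non-negative integer, and b ∈ Z/nZ. The number N_n(k,b) of solutions ⟨x_1, ..., x_k⟩ ∈ (Z/nZ)^k of the linear congruence x_1 + ... + x_k ≡ b (mod n) with all x_i distinct modulo n satisfies N_n(k,b) = ((−1)^k · k!/n) · ∑_{d | gcd(n,k)} (−1)^{k/d} · c_d(b) · binom(n/d, k/d). -/
open Finset

/-- The Ramanujan sum `c_n(m) = ∑_{1 ≤ j ≤ n, gcd(j,n)=1} exp(2πi·jm/n)`. -/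
noncomputable def ramanujanSum (n : ℕ) (m : ℕ) : ℂ :=
  ∑ j ∈ (Finset.Icc 1 n).filter (fun j => Nat.gcd j n = 1),
    Complex.exp (2 * Real.pi * Complex.I * (j : ℂ) * (m : ℂ) / (n : ℂ))


open Polynomial


lemma pow_modEq {ω : ℂ} {n : ℕ} (hω : ω ^ n = 1) {a b : ℕ} (h : a ≡ b [MOD n]) :
    ω ^ a = ω ^ b := by
  conv_lhs => rw [← Nat.div_add_mod a n]
  conv_rhs => rw [← Nat.div_add_mod b n]
  rw [pow_add, pow_add, pow_mul, pow_mul, hω, one_pow, one_pow,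
    show a % n = b % n from h]

lemma pow_val_add {n : ℕ} [NeZero n] {ω : ℂ} (hω : ω ^ n = 1) (x y : ZMod n) :
    ω ^ (x + y).val = ω ^ x.val * ω ^ y.val := by
  rw [← pow_add]
  apply pow_modEq hω
  rw [ZMod.val_add]
  exact Nat.mod_modEq _ n

lemma pow_val_sum {n : ℕ} [NeZero n] {ω : ℂ} (hω : ω ^ n = 1) {α : Type*} (s : Finset α)
    (f : α → ZMod n) : ω ^ (∑ x ∈ s, f x).val = ∏ x ∈ s, ω ^ (f x).val := by
  induction s using Finset.cons_induction with
  | empty => simp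
  | cons a s ha ih => rw [Finset.sum_cons, pow_val_add hω, ih, Finset.prod_cons]

lemma sum_char {n : ℕ} (hn : 0 < n) {ω : ℂ} (hω : IsPrimitiveRoot ω n) (z : ZMod n) :
    ∑ t ∈ range n, (ω ^ z.val) ^ t = if z = 0 then (n : ℂ) else 0 := by
  haveI : NeZero n := ⟨hn.ne'⟩
  by_cases hz : z = 0
  · simp [hz]
  · rw [if_neg hz]
    have h1 : ω ^ z.val ≠ 1 :=
      hω.pow_ne_one_of_pos_of_lt (fun h => hz ((ZMod.val_eq_zero z).mp h))
        z.val_lt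
    rw [geom_sum_eq h1]
    have h2 : (ω ^ z.val) ^ n = 1 := by
      rw [← pow_mul, mul_comm, pow_mul, hω.pow_eq_one, one_pow]
    rw [h2, sub_self, zero_div]

lemma fiber_card {α : Type*} [Fintype α] [DecidableEq α] {k : ℕ} (s : Finset α)
    (hs : s.card = k) :
    (univ.filter (fun x : Fin k → α => Function.Injective x ∧ Finset.image x univ = s)).card
      = Nat.factorial k := by
  classical
  rw [← Fintype.card_subtype]
  have hcard : Fintype.card (↥s) = Fintype.card (Fin k) := by
    simp [Fintype.card_coe, hs]
  have E : {x : Fin k → α // Function.Injective x ∧ Finset.image x univ = s}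
      ≃ (Fin k ≃ ↥s) := {
    toFun := fun x => Equiv.ofBijective
        (fun i => (⟨x.1 i, by
          have := mem_image_of_mem x.1 (mem_univ i); rwa [x.2.2] at this⟩ : ↥s))
        ((Fintype.bijective_iff_injective_and_card _).mpr
          ⟨fun i j h => x.2.1 (congrArg Subtype.val h), hcard.symm⟩)
    invFun := fun e => ⟨fun i => (e i : α),
      fun i j h => e.injective (Subtype.ext h),
      by
        ext a
        simp only [mem_image, mem_univ, true_and]
        constructor
        · rintro ⟨i, rfl⟩; exact (e i).2
        · intro ha; exact ⟨e.symm ⟨a, ha⟩, by simp⟩⟩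
    left_inv := fun x => Subtype.ext (_root_.funext fun i => rfl)
    right_inv := fun e => Equiv.ext fun i => Subtype.ext rfl }
  rw [Fintype.card_congr E,
    Fintype.card_equiv (Fintype.equivOfCardEq hcard.symm), Fintype.card_fin]

lemma prod_range_mul_period {M : Type*} [CommMonoid M] (f : ℕ → M) (m : ℕ)
    (hper : ∀ i, f (i + m) = f i) (g : ℕ) :
    ∏ i ∈ range (g * m), f i = (∏ i ∈ range m, f i) ^ g := by
  have hshift : ∀ a i, f (a * m + i) = f i := by
    intro a
    induction a with
    | zero => simp
    | succ a ih => intro i; rw [Nat.succ_mul, add_right_comm, hper, ih]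
  induction g with
  | zero => simp
  | succ g ih =>
    rw [Nat.succ_mul, Finset.prod_range_add, ih, pow_succ]
    congr 1
    exact Finset.prod_congr rfl fun i _ => hshift g i

lemma coeff_pow_aux (m g : ℕ) (c : ℂ) (j : ℕ) (hj : j ≤ m * g) (hm : 0 < m) :
    ((X ^ m + C c) ^ g).coeff j =
      if m ∣ j then ((g.choose (j / m) : ℂ) * c ^ (g - j / m)) else 0 := by
  rw [add_pow]
  have hterm : ∀ i, ((X ^ m) ^ i * C c ^ (g - i) * (g.choose i : ℂ[X]))
      = C (c ^ (g - i) * (g.choose i : ℂ)) * X ^ (m * i) := by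
    intro i
    rw [← pow_mul, ← C_pow, ← C_eq_natCast, C_mul]
    ring
  rw [finset_sum_coeff]
  simp_rw [hterm, coeff_C_mul_X_pow]
  by_cases hd : m ∣ j
  · rw [if_pos hd]
    obtain ⟨i0, rfl⟩ := hd
    have hi0 : i0 ∈ range (g + 1) := by
      rw [mem_range, Nat.lt_succ_iff]
      exact Nat.le_of_mul_le_mul_left hj hm
    rw [Finset.sum_eq_single_of_mem i0 hi0]
    · rw [if_pos rfl, Nat.mul_div_cancel_left _ hm, mul_comm]
    · intro i _ hi
      rw [if_neg (fun h => hi (Nat.eq_of_mul_eq_mul_left hm h.symm))]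
  · rw [if_neg hd]
    apply Finset.sum_eq_zero
    intro i _
    rw [if_neg (fun h => hd ⟨i, h⟩)]
lemma esymm_roots {n : ℕ} [NeZero n] (hn : 0 < n) {ω : ℂ} (hω : IsPrimitiveRoot ω n) (t k : ℕ)
    (hk : k ≤ n) :
    ∑ s ∈ (univ : Finset (ZMod n)).powersetCard k, ∏ x ∈ s, (ω ^ x.val) ^ t =
      (if (n / Nat.gcd t n) ∣ k
        then (-1 : ℂ) ^ (k + k / (n / Nat.gcd t n)) *
          ((n / (n / Nat.gcd t n)).choose (k / (n / Nat.gcd t n)) : ℂ)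
        else 0) := by
  set g := Nat.gcd t n with hg
  set m := n / g with hmdef
  have hgpos : 0 < g := Nat.gcd_pos_of_pos_right t hn
  have hgdvd : g ∣ n := Nat.gcd_dvd_right t n
  have hmn : m * g = n := by rw [hmdef, Nat.div_mul_cancel hgdvd]
  have hmpos : 0 < m := Nat.div_pos (Nat.le_of_dvd hn hgdvd) hgpos
  have hζ : IsPrimitiveRoot (ω ^ t) m := by
    have h1 : IsPrimitiveRoot (ω ^ g) m := hω.pow_of_dvd hgpos.ne' hgdvd
    have h2 := h1.pow_of_coprime (t / g) (Nat.coprime_div_gcd_div_gcd hgpos)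
    rwa [← pow_mul, Nat.mul_div_cancel' (Nat.gcd_dvd_left t n)] at h2
  have hcard : (univ : Finset (ZMod n)).card = n := by
    rw [Finset.card_univ, ZMod.card]
  have ha := Finset.prod_X_add_C_coeff (univ : Finset (ZMod n))
      (fun x => (ω ^ x.val) ^ t) (k := n - k) (by rw [hcard]; omega)
  rw [hcard, Nat.sub_sub_self hk] at ha
  beta_reduce at ha
  rw [← ha]
  have hb : (∏ x : ZMod n, (X + C ((ω ^ x.val) ^ t)))
      = (X ^ m + C ((-1 : ℂ) ^ (m + 1))) ^ g := by
    have hb1 : (∏ x : ZMod n, (X + C ((ω ^ x.val) ^ t)))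
        = ∏ i ∈ range n, (X + C ((ω ^ t) ^ i)) := by
      apply Finset.prod_bij' (fun (x : ZMod n) _ => x.val) (fun i _ => (i : ZMod n))
      · intro a _; exact mem_range.mpr a.val_lt
      · intro i _; exact mem_univ _
      · intro a _; exact ZMod.natCast_rightInverse a
      · intro i hi; exact ZMod.val_cast_of_lt (mem_range.mp hi)
      · intro a _; rw [pow_right_comm]
    have hb2 : (∏ i ∈ range n, (X + C ((ω ^ t) ^ i)))
        = (∏ i ∈ range m, (X + C ((ω ^ t) ^ i))) ^ g := by
      rw [← hmn, mul_comm m g]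
      apply prod_range_mul_period
      intro i
      rw [pow_add, hζ.pow_eq_one, mul_one]
    have hb3 : (∏ i ∈ range m, (X + C ((ω ^ t) ^ i)))
        = X ^ m + C ((-1 : ℂ) ^ (m + 1)) := by
      have h := X_pow_sub_C_eq_prod hζ hmpos (a := (-1 : ℂ) ^ m) (α := (-1 : ℂ)) rfl
      simp only [mul_neg_one, map_neg, sub_neg_eq_add] at h
      rw [← h, pow_succ, mul_neg_one, map_neg, sub_eq_add_neg]
    rw [hb1, hb2, hb3]
  rw [hb, coeff_pow_aux m g _ (n - k) (by rw [hmn]; omega) hmpos]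
  have hmdvdn : m ∣ n := ⟨g, hmn.symm⟩
  have hiff : m ∣ n - k ↔ m ∣ k := by
    constructor
    · intro h
      have h2 := Nat.dvd_sub hmdvdn h
      rwa [Nat.sub_sub_self hk] at h2
    · intro h; exact Nat.dvd_sub hmdvdn h
  by_cases hdk : m ∣ k
  · rw [if_pos (hiff.mpr hdk), if_pos hdk]
    obtain ⟨q, hq⟩ := hdk
    have hqg : q ≤ g := by
      have : m * q ≤ m * g := by rw [← hq, hmn]; exact hk
      exact Nat.le_of_mul_le_mul_left this hmpos
    have h1 : n - k = m * (g - q) := by rw [Nat.mul_sub, hmn, ← hq]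
    have h3 : k / m = q := by rw [hq, Nat.mul_div_cancel_left _ hmpos]
    have h4 : n / m = g := by rw [hmdef, Nat.div_div_self hgdvd hn.ne']
    rw [h1, Nat.mul_div_cancel_left _ hmpos, h3, h4]
    have h2 : g - (g - q) = q := by omega
    rw [h2, Nat.choose_symm hqg, ← pow_mul]
    have h5 : (m + 1) * q = k + q := by rw [add_mul, one_mul, ← hq]
    rw [h5, mul_comm]
  · rw [if_neg (fun h => hdk (hiff.mp h)), if_neg hdk]
lemma ramanujan_eq {n : ℕ} [NeZero n] (hn : 0 < n) (b : ZMod n) (d : ℕ) (hd : d ∣ n)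
    (hd0 : 0 < d) :
    ∑ t ∈ (range n).filter (fun t => n / Nat.gcd t n = d),
        ((Complex.exp (2 * Real.pi * Complex.I / n)) ^ (-b).val) ^ t
      = ramanujanSum d b.val := by
  have hω : IsPrimitiveRoot (Complex.exp (2 * Real.pi * Complex.I / n)) n :=
    Complex.isPrimitiveRoot_exp n hn.ne'
  set ω := Complex.exp (2 * Real.pi * Complex.I / n) with hωdef
  set e := n / d with hedef
  have he : e * d = n := by rw [hedef, Nat.div_mul_cancel hd]
  have hepos : 0 < e := Nat.div_pos (Nat.le_of_dvd hn hd) hd0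
  have hne : n / e = d := by rw [hedef, Nat.div_div_self hd hn.ne']
  rw [ramanujanSum]
  apply Finset.sum_bij' (fun t _ => (n - t) / e) (fun j _ => n - e * j)
  · -- hi : maps into Icc 1 d filter coprime
    intro t ht
    rw [mem_filter, mem_range] at ht
    obtain ⟨htn, htd⟩ := ht
    have hG : Nat.gcd t n = e := by
      have h1 : n / (n / Nat.gcd t n) = Nat.gcd t n :=
        Nat.div_div_self (Nat.gcd_dvd_right t n) hn.ne'
      rw [htd] at h1
      rw [← h1, hedef]
    have het : e ∣ t := hG ▸ Nat.gcd_dvd_left t n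
    have hent : e ∣ n - t := Nat.dvd_sub (hG ▸ Nat.gcd_dvd_right t n) het
    have hnt : e * ((n - t) / e) = n - t := Nat.mul_div_cancel' hent
    have hgsub : Nat.gcd (n - t) n = e := by
      rw [Nat.gcd_self_sub_left htn.le, hG]
    rw [mem_filter, mem_Icc]
    refine ⟨⟨?_, ?_⟩, ?_⟩
    · have h2 : 0 < n - t := by omega
      have h3 : e ≤ n - t := Nat.le_of_dvd h2 hent
      exact Nat.one_le_div_iff hepos |>.mpr h3
    · calc (n - t) / e ≤ n / e := Nat.div_le_div_right (by omega)
        _ = d := hne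
    · have h4 : Nat.gcd (e * ((n - t) / e)) (e * d) = e := by rw [hnt, he, hgsub]
      rw [Nat.gcd_mul_left] at h4
      exact Nat.eq_of_mul_eq_mul_left hepos (by rw [h4, mul_one])
  · -- hj : maps back into range-filter
    intro j hj
    rw [mem_filter, mem_Icc] at hj
    obtain ⟨⟨hj1, hjd⟩, hjcop⟩ := hj
    have hejn : e * j ≤ n := by calc e * j ≤ e * d := Nat.mul_le_mul_left e hjd
                                  _ = n := he
    have hej1 : 1 ≤ e * j := Nat.one_le_iff_ne_zero.mpr (by positivity)
    rw [mem_filter, mem_range]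
    constructor
    · omega
    · have h5 : Nat.gcd (n - e * j) n = e := by
        rw [Nat.gcd_self_sub_left hejn, ← he, Nat.gcd_mul_left, hjcop, mul_one]
      rw [h5, hne]
  · -- left inverse
    intro t ht
    rw [mem_filter, mem_range] at ht
    obtain ⟨htn, htd⟩ := ht
    have hG : Nat.gcd t n = e := by
      have h1 : n / (n / Nat.gcd t n) = Nat.gcd t n :=
        Nat.div_div_self (Nat.gcd_dvd_right t n) hn.ne'
      rw [htd] at h1
      rw [← h1, hedef]
    have het : e ∣ t := hG ▸ Nat.gcd_dvd_left t n
    have hent : e ∣ n - t := Nat.dvd_sub (hG ▸ Nat.gcd_dvd_right t n) het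
    have hnt : e * ((n - t) / e) = n - t := Nat.mul_div_cancel' hent
    omega
  · -- right inverse
    intro j hj
    rw [mem_filter, mem_Icc] at hj
    have hejn : e * j ≤ n := by calc e * j ≤ e * d := Nat.mul_le_mul_left e hj.1.2
                                  _ = n := he
    rw [Nat.sub_sub_self hejn, Nat.mul_div_cancel_left _ hepos]
  · -- values agree
    intro t ht
    rw [mem_filter, mem_range] at ht
    obtain ⟨htn, htd⟩ := ht
    have hG : Nat.gcd t n = e := by
      have h1 : n / (n / Nat.gcd t n) = Nat.gcd t n :=
        Nat.div_div_self (Nat.gcd_dvd_right t n) hn.ne'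
      rw [htd] at h1
      rw [← h1, hedef]
    have het : e ∣ t := hG ▸ Nat.gcd_dvd_left t n
    have hent : e ∣ n - t := Nat.dvd_sub (hG ▸ Nat.gcd_dvd_right t n) het
    have hnt : e * ((n - t) / e) = n - t := Nat.mul_div_cancel' hent
    set j := (n - t) / e with hjdef
    have step1 : (ω ^ (-b).val) ^ t = ω ^ (e * j * b.val) := by
      rw [← pow_mul]
      apply pow_modEq (hω.pow_eq_one)
      rw [← ZMod.natCast_eq_natCast_iff, hnt, Nat.cast_mul, Nat.cast_mul,
        Nat.cast_sub htn.le, ZMod.natCast_rightInverse (-b), ZMod.natCast_rightInverse b,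
        ZMod.natCast_self]
      ring
    rw [step1, hωdef, ← Complex.exp_nat_mul]
    congr 1
    have hecast : (e : ℂ) = (n : ℂ) / (d : ℂ) := by
      rw [hedef, Nat.cast_div hd (Nat.cast_ne_zero.mpr hd0.ne')]
    push_cast
    rw [hecast]
    have hn0 : (n : ℂ) ≠ 0 := Nat.cast_ne_zero.mpr hn.ne'
    have hd0' : (d : ℂ) ≠ 0 := Nat.cast_ne_zero.mpr hd0.ne'
    field_simp
lemma regroup_lemma {n : ℕ} [NeZero n] (hn : 0 < n) (b : ZMod n) (F : ℕ → ℂ) :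
    ∑ t ∈ range n,
        ((Complex.exp (2 * Real.pi * Complex.I / n)) ^ (-b).val) ^ t * F (n / Nat.gcd t n)
      = ∑ d ∈ n.divisors, ramanujanSum d b.val * F d := by
  rw [← Finset.sum_fiberwise_of_maps_to (g := fun t => n / Nat.gcd t n) (t := n.divisors)
    (fun t _ => Nat.mem_divisors.mpr ⟨Nat.div_dvd_of_dvd (Nat.gcd_dvd_right t n), hn.ne'⟩)]
  apply Finset.sum_congr rfl
  intro d hd
  have hd' := Nat.mem_divisors.mp hd
  have hd0 : 0 < d := Nat.pos_of_mem_divisors hd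
  calc ∑ t ∈ (range n).filter (fun t => n / Nat.gcd t n = d),
          ((Complex.exp (2 * Real.pi * Complex.I / n)) ^ (-b).val) ^ t * F (n / Nat.gcd t n)
      = ∑ t ∈ (range n).filter (fun t => n / Nat.gcd t n = d),
          ((Complex.exp (2 * Real.pi * Complex.I / n)) ^ (-b).val) ^ t * F d :=
        Finset.sum_congr rfl (fun t ht => by rw [(Finset.mem_filter.mp ht).2])
    _ = (∑ t ∈ (range n).filter (fun t => n / Nat.gcd t n = d),
          ((Complex.exp (2 * Real.pi * Complex.I / n)) ^ (-b).val) ^ t) * F d := by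
        rw [Finset.sum_mul]
    _ = ramanujanSum d b.val * F d := by rw [ramanujan_eq hn b d hd'.1 hd0]
/-- The number `N_n(k,b)` of solutions of `x₁ + ⋯ + xₖ ≡ b (mod n)` with all `xᵢ`
distinct modulo `n` is `((−1)^k·k!/n) · ∑_{d ∣ gcd(n,k)} (−1)^{k/d} c_d(b) C(n/d, k/d)`. -/
theorem count_distinct_solutions (n : ℕ) (hn : 0 < n) (k : ℕ) (b : ZMod n) :
    (Nat.card {x : Fin k → ZMod n // (∑ i, x i) = b ∧ Function.Injective x} : ℂ) =
      (-1 : ℂ) ^ k * (Nat.factorial k : ℂ) / (n : ℂ) *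
        ∑ d ∈ (Nat.gcd n k).divisors,
          (-1 : ℂ) ^ (k / d) * ramanujanSum d b.val * ((n / d).choose (k / d) : ℂ) := by
  classical
  haveI : NeZero n := ⟨hn.ne'⟩
  by_cases hkn : k ≤ n
  · -- main case
    have hω : IsPrimitiveRoot (Complex.exp (2 * Real.pi * Complex.I / n)) n :=
      Complex.isPrimitiveRoot_exp n hn.ne'
    set ω : ℂ := Complex.exp (2 * Real.pi * Complex.I / n) with hωdef
    set T : Finset (Finset (ZMod n)) :=
      ((univ : Finset (ZMod n)).powersetCard k).filter (fun s => ∑ x ∈ s, x = b) with hT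
    -- Step A : the number of injective tuples is k! times the number of subsets
    have hN : Nat.card {x : Fin k → ZMod n // (∑ i, x i) = b ∧ Function.Injective x}
        = k.factorial * T.card := by
      rw [Nat.card_eq_fintype_card, Fintype.card_subtype]
      rw [Finset.card_eq_sum_card_fiberwise (f := fun x => Finset.image x univ) (t := T)
        (fun x hx => by
          rw [Finset.mem_coe, Finset.mem_filter] at hx
          obtain ⟨-, hsum, hinj⟩ := hx
          rw [Finset.mem_coe, hT, Finset.mem_filter]
          refine ⟨Finset.mem_powersetCard_univ.mpr ?_, ?_⟩
          · rw [Finset.card_image_of_injective _ hinj, Finset.card_univ, Fintype.card_fin]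
          · rw [Finset.sum_image (fun i _ j _ h => hinj h)]
            exact hsum)]
      rw [Finset.sum_congr rfl (fun s hs => ?_), Finset.sum_const, smul_eq_mul, mul_comm]
      have hs' := Finset.mem_filter.mp hs
      have hsk : s.card = k := Finset.mem_powersetCard_univ.mp hs'.1
      have hsb : ∑ x ∈ s, x = b := hs'.2
      have hfil : ((univ.filter
            (fun x : Fin k → ZMod n => (∑ i, x i) = b ∧ Function.Injective x)).filter
            (fun x => Finset.image x univ = s))
          = univ.filter (fun x : Fin k → ZMod n =>
              Function.Injective x ∧ Finset.image x univ = s) := by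
        rw [Finset.filter_filter]
        apply Finset.filter_congr
        intro x _
        constructor
        · rintro ⟨⟨_, hinj⟩, him⟩; exact ⟨hinj, him⟩
        · rintro ⟨hinj, him⟩
          refine ⟨⟨?_, hinj⟩, him⟩
          have hsumim : ∑ y ∈ Finset.image x univ, y = ∑ i, x i :=
            Finset.sum_image (fun i _ j _ h => hinj h)
          rw [him] at hsumim
          rw [← hsumim]
          exact hsb
      rw [hfil, fiber_card s hsk]
    -- Step B : character sum evaluation
    have horth : ∀ s : Finset (ZMod n),
        ∑ t ∈ range n, (ω ^ ((∑ x ∈ s, x) - b).val) ^ t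
          = if (∑ x ∈ s, x) = b then (n : ℂ) else 0 := by
      intro s
      rw [sum_char hn hω]
      simp only [sub_eq_zero]
    have step1 : (n : ℂ) * T.card
        = ∑ s ∈ (univ : Finset (ZMod n)).powersetCard k,
            ∑ t ∈ range n, (ω ^ ((∑ x ∈ s, x) - b).val) ^ t := by
      rw [Finset.sum_congr rfl (fun s _ => horth s), ← Finset.sum_filter, Finset.sum_const,
        nsmul_eq_mul, mul_comm]
    have step2 : ∀ s ∈ (univ : Finset (ZMod n)).powersetCard k, ∀ t ∈ range n,
        (ω ^ ((∑ x ∈ s, x) - b).val) ^ t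
          = (ω ^ (-b).val) ^ t * ∏ x ∈ s, (ω ^ x.val) ^ t := by
      intro s _ t _
      rw [sub_eq_add_neg, pow_val_add hω.pow_eq_one, pow_val_sum hω.pow_eq_one, mul_pow,
        Finset.prod_pow, mul_comm]
    have step3 : ∀ t ∈ range n, ∑ s ∈ (univ : Finset (ZMod n)).powersetCard k,
        (ω ^ (-b).val) ^ t * ∏ x ∈ s, (ω ^ x.val) ^ t
          = (ω ^ (-b).val) ^ t *
            (if (n / Nat.gcd t n) ∣ k
              then (-1 : ℂ) ^ (k + k / (n / Nat.gcd t n)) *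
                ((n / (n / Nat.gcd t n)).choose (k / (n / Nat.gcd t n)) : ℂ)
              else 0) := by
      intro t _
      rw [← Finset.mul_sum, esymm_roots hn hω t k hkn]
    have step4 : ∑ t ∈ range n, (ω ^ (-b).val) ^ t *
            (if (n / Nat.gcd t n) ∣ k
              then (-1 : ℂ) ^ (k + k / (n / Nat.gcd t n)) *
                ((n / (n / Nat.gcd t n)).choose (k / (n / Nat.gcd t n)) : ℂ)
              else 0)
        = ∑ d ∈ n.divisors, ramanujanSum d b.val *
            (if d ∣ k
              then (-1 : ℂ) ^ (k + k / d) * ((n / d).choose (k / d) : ℂ)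
              else 0) := by
      rw [hωdef]
      exact regroup_lemma hn b
        (fun d => if d ∣ k then (-1 : ℂ) ^ (k + k / d) * ((n / d).choose (k / d) : ℂ) else 0)
    have hdivset : n.divisors.filter (· ∣ k) = (Nat.gcd n k).divisors := by
      ext d
      simp only [Finset.mem_filter, Nat.mem_divisors]
      constructor
      · rintro ⟨⟨h1, _⟩, h3⟩
        exact ⟨Nat.dvd_gcd h1 h3, fun h => hn.ne' (Nat.gcd_eq_zero_iff.mp h).1⟩
      · rintro ⟨h1, _⟩
        exact ⟨⟨h1.trans (Nat.gcd_dvd_left n k), hn.ne'⟩, h1.trans (Nat.gcd_dvd_right n k)⟩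
    have hKey : (n : ℂ) * T.card = ∑ d ∈ (Nat.gcd n k).divisors,
        (-1 : ℂ) ^ (k + k / d) * ramanujanSum d b.val * ((n / d).choose (k / d) : ℂ) := by
      rw [step1, Finset.sum_congr rfl (fun s hs => Finset.sum_congr rfl (step2 s hs)),
        Finset.sum_comm, Finset.sum_congr rfl step3, step4]
      simp_rw [mul_ite, mul_zero]
      rw [← Finset.sum_filter, hdivset]
      exact Finset.sum_congr rfl (fun d _ => by ring)
    -- final algebra
    have hn0 : (n : ℂ) ≠ 0 := Nat.cast_ne_zero.mpr hn.ne'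
    rw [hN, div_mul_eq_mul_div, eq_div_iff hn0]
    calc ((k.factorial * T.card : ℕ) : ℂ) * n
        = (k.factorial : ℂ) * ((n : ℂ) * T.card) := by push_cast; ring
      _ = (k.factorial : ℂ) * ∑ d ∈ (Nat.gcd n k).divisors,
            (-1 : ℂ) ^ (k + k / d) * ramanujanSum d b.val * ((n / d).choose (k / d) : ℂ) := by
          rw [hKey]
      _ = (-1 : ℂ) ^ k * (k.factorial : ℂ) *
            ∑ d ∈ (Nat.gcd n k).divisors,
              (-1 : ℂ) ^ (k / d) * ramanujanSum d b.val * ((n / d).choose (k / d) : ℂ) := by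
          rw [Finset.mul_sum, Finset.mul_sum]
          exact Finset.sum_congr rfl (fun d _ => by rw [pow_add]; ring)
  · -- degenerate case k > n : both sides are zero
    push_neg at hkn
    have hL : Nat.card {x : Fin k → ZMod n // (∑ i, x i) = b ∧ Function.Injective x} = 0 := by
      rw [Nat.card_eq_zero]
      left
      refine ⟨fun x => ?_⟩
      have h1 := Fintype.card_le_of_injective x.1 x.2.2
      rw [Fintype.card_fin, ZMod.card] at h1
      omega
    have hR : ∑ d ∈ (Nat.gcd n k).divisors,
        (-1 : ℂ) ^ (k / d) * ramanujanSum d b.val * ((n / d).choose (k / d) : ℂ) = 0 := by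
      apply Finset.sum_eq_zero
      intro d hd
      have hd' := Nat.mem_divisors.mp hd
      have hdk : d ∣ k := hd'.1.trans (Nat.gcd_dvd_right n k)
      have hch : (n / d).choose (k / d) = 0 :=
        Nat.choose_eq_zero_of_lt (Nat.div_lt_div_of_lt_of_dvd hdk hkn)
      rw [hch, Nat.cast_zero, mul_zero]
    rw [hL, hR, mul_zero, Nat.cast_zero]
end

section
/- Let n be a positive integer and b ∈ Z/nZ. Define T_n(b) = ∑_{k=0}^{n} P_n(k,b), where P_n(k,b) is the number of k-element subsets of Z/nZ whose elements sum to b in Z/nZ (equivalently, T_n(b) is the number of subsets of {1, 2, ..., n} whose element sum is congruent to b modulo n). Then T_n(b) = (1/n) · ∑_{d | n, d odd} c_d(b) · 2^{n/d}. -/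
open Finset

namespace RamAux


lemma orth {n : ℕ} {ζ : ℂ} (hζ : IsPrimitiveRoot ζ n) (a : ℤ) :
    ∑ j ∈ range n, ζ ^ ((j : ℤ) * a) = if (n : ℤ) ∣ a then (n : ℂ) else 0 := by
  have h1 : ∀ j : ℕ, ζ ^ ((j : ℤ) * a) = (ζ ^ a) ^ j := by
    intro j
    rw [mul_comm, zpow_mul, zpow_natCast]
  simp_rw [h1]
  by_cases h : (n : ℤ) ∣ a
  · rw [if_pos h, (hζ.zpow_eq_one_iff_dvd a).mpr h]
    simp
  · have hne : ζ ^ a ≠ 1 := fun hh => h ((hζ.zpow_eq_one_iff_dvd a).mp hh)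
    rw [geom_sum_eq hne, if_neg h]
    have h2 : (ζ ^ a) ^ n = 1 := by
      rw [← zpow_natCast (ζ ^ a) n, ← zpow_mul, mul_comm, zpow_mul, zpow_natCast, hζ.pow_eq_one,
        one_zpow]
    rw [h2]
    simp

lemma prod_one_add_pow {d : ℕ} (hd : 0 < d) {η : ℂ} (hη : IsPrimitiveRoot η d) :
    ∏ i ∈ range d, (1 + η ^ i) = 1 - (-1 : ℂ) ^ d := by
  haveI : NeZero d := ⟨hd.ne'⟩
  have key : Polynomial.eval (-1 : ℂ) (∏ ζ ∈ Polynomial.nthRootsFinset d (1 : ℂ),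
      (Polynomial.X - Polynomial.C ζ)) = (-1 : ℂ) ^ d - 1 := by
    have := congrArg (Polynomial.eval (-1 : ℂ)) (Polynomial.X_pow_sub_one_eq_prod hd hη)
    simpa using this.symm
  rw [Polynomial.eval_prod] at key
  simp only [Polynomial.eval_sub, Polynomial.eval_X, Polynomial.eval_C] at key
  have hset : Polynomial.nthRootsFinset d (1 : ℂ) = (range d).image (fun i => η ^ i) := by
    ext x
    rw [Polynomial.mem_nthRootsFinset hd (1 : ℂ), Finset.mem_image]
    constructor
    · intro hx
      obtain ⟨i, hi, hix⟩ := hη.eq_pow_of_pow_eq_one hx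
      exact ⟨i, Finset.mem_range.mpr hi, hix⟩
    · rintro ⟨i, _, rfl⟩
      rw [← pow_mul, mul_comm, pow_mul, hη.pow_eq_one, one_pow]
  rw [hset, Finset.prod_image (fun i hi j hj h =>
    hη.pow_inj (mem_range.mp hi) (mem_range.mp hj) h)] at key
  calc ∏ i ∈ range d, (1 + η ^ i)
      = ∏ i ∈ range d, (-1 : ℂ) * (-1 - η ^ i) := Finset.prod_congr rfl fun i _ => by ring
    _ = (-1 : ℂ) ^ d * ((-1 : ℂ) ^ d - 1) := by
        rw [Finset.prod_mul_distrib, Finset.prod_const, Finset.card_range, key]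
    _ = 1 - (-1 : ℂ) ^ d := by rw [mul_sub, ← mul_pow]; norm_num

lemma prod_one_add_pow_mul {η : ℂ} {d : ℕ} (hη : η ^ d = 1) (m : ℕ) :
    ∏ i ∈ range (m * d), (1 + η ^ i) = (∏ i ∈ range d, (1 + η ^ i)) ^ m := by
  induction m with
  | zero => simp
  | succ m ih =>
    rw [Nat.succ_mul, Finset.prod_range_add, ih, pow_succ]
    congr 1
    refine Finset.prod_congr rfl fun i _ => ?_
    rw [pow_add, pow_mul', hη, one_pow, one_mul]

lemma prod_lemma {n : ℕ} (hn : 0 < n) {ζ : ℂ} (hζ : IsPrimitiveRoot ζ n) (j : ℕ) :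
    ∏ i ∈ range n, (1 + ζ ^ (j * i)) =
      if Odd (n / Nat.gcd j n) then (2 : ℂ) ^ (Nat.gcd j n) else 0 := by
  set g := Nat.gcd j n with hg
  have hgdvd : g ∣ n := Nat.gcd_dvd_right j n
  have hgpos : 0 < g := Nat.gcd_pos_of_pos_right j hn
  set d := n / g with hd
  have hdpos : 0 < d := Nat.div_pos (Nat.le_of_dvd hn hgdvd) hgpos
  have hη : IsPrimitiveRoot (ζ ^ j) d := by
    have horder : orderOf (ζ ^ j) = d := by
      rcases Nat.eq_zero_or_pos j with rfl | hj
      · simp only [pow_zero, orderOf_one, hd, hg, Nat.gcd_zero_left, Nat.div_self hn]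
      · rw [orderOf_pow' _ hj.ne', ← hζ.eq_orderOf, hd, hg, Nat.gcd_comm]
    exact horder ▸ IsPrimitiveRoot.orderOf (ζ ^ j)
  have hηd : (ζ ^ j) ^ d = 1 := hη.pow_eq_one
  have hn' : n = g * d := (Nat.mul_div_cancel' hgdvd).symm
  calc ∏ i ∈ range n, (1 + ζ ^ (j * i)) = ∏ i ∈ range (g * d), (1 + (ζ ^ j) ^ i) := by
        rw [← hn']
        exact Finset.prod_congr rfl fun i _ => by rw [pow_mul]
    _ = (∏ i ∈ range d, (1 + (ζ ^ j) ^ i)) ^ g := prod_one_add_pow_mul hηd g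
    _ = (1 - (-1 : ℂ) ^ d) ^ g := by rw [prod_one_add_pow hdpos hη]
    _ = if Odd d then (2 : ℂ) ^ g else 0 := by
        by_cases hodd : Odd d
        · rw [if_pos hodd, hodd.neg_one_pow]
          norm_num
        · rw [if_neg hodd, (Nat.not_odd_iff_even.mp hodd).neg_one_pow]
          simp [hgpos.ne']

lemma gcd_sub (d a : ℕ) (ha : a ≤ d) : Nat.gcd (d - a) d = Nat.gcd a d := by
  rw [show (d - a).gcd d = (d - a).gcd ((d - a) + a) from by rw [Nat.sub_add_cancel ha],
    Nat.gcd_self_add_right, Nat.gcd_sub_self_left ha, Nat.gcd_comm]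

lemma ram_eq {n d m : ℕ} (hd : 0 < d) (hm : 0 < m) (hnm : n = d * m) (bv : ℕ) :
    ∑ a ∈ (range d).filter (fun a => Nat.gcd a d = 1),
      (Complex.exp (2 * Real.pi * Complex.I / (n : ℂ))) ^ (-((m * a * bv : ℕ) : ℤ))
      = ramanujanSum d bv := by
  have hd0 : (d : ℂ) ≠ 0 := Nat.cast_ne_zero.mpr hd.ne'
  have hm0 : (m : ℂ) ≠ 0 := Nat.cast_ne_zero.mpr hm.ne'
  rw [ramanujanSum]
  refine Finset.sum_nbij' (fun a => d - a) (fun jj => d - jj) ?_ ?_ ?_ ?_ ?_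
  · intro a ha
    obtain ⟨ha1, ha2⟩ := Finset.mem_filter.mp ha
    have halt : a < d := Finset.mem_range.mp ha1
    refine Finset.mem_filter.mpr ⟨Finset.mem_Icc.mpr ⟨?_, ?_⟩, ?_⟩
    · omega
    · omega
    · rw [gcd_sub d a halt.le]; exact ha2
  · intro jj hjj
    obtain ⟨hjj1, hjj2⟩ := Finset.mem_filter.mp hjj
    obtain ⟨hjl, hjr⟩ := Finset.mem_Icc.mp hjj1
    refine Finset.mem_filter.mpr ⟨Finset.mem_range.mpr ?_, ?_⟩
    · omega
    · rw [gcd_sub d jj hjr]; exact hjj2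
  · intro a ha
    obtain ⟨ha1, _⟩ := Finset.mem_filter.mp ha
    have := Finset.mem_range.mp ha1
    omega
  · intro jj hjj
    obtain ⟨hjj1, _⟩ := Finset.mem_filter.mp hjj
    obtain ⟨hjl, hjr⟩ := Finset.mem_Icc.mp hjj1
    omega
  · intro a ha
    obtain ⟨ha1, ha2⟩ := Finset.mem_filter.mp ha
    have halt : a < d := Finset.mem_range.mp ha1
    have hζk : ∀ k : ℤ, (Complex.exp (2 * Real.pi * Complex.I / (n : ℂ))) ^ k
        = Complex.exp ((k : ℂ) * (2 * Real.pi * Complex.I / (n : ℂ))) :=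
      fun k => (Complex.exp_int_mul _ k).symm
    rw [hζk]
    have hexp : 2 * (Real.pi : ℂ) * Complex.I * (((d - a : ℕ) : ℕ) : ℂ) * (bv : ℂ) / (d : ℂ)
        = ((-((m * a * bv : ℕ) : ℤ) : ℤ) : ℂ) * (2 * Real.pi * Complex.I / (n : ℂ))
          + (bv : ℂ) * (2 * Real.pi * Complex.I) := by
      subst hnm
      push_cast [Nat.cast_sub halt.le]
      field_simp
      ring
    rw [hexp, Complex.exp_add, Complex.exp_nat_mul, Complex.exp_two_pi_mul_I, one_pow, mul_one]


end RamAux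

open RamAux in
/-- `T_n(b) = ∑_{k=0}^{n} P_n(k,b)`, the number of subsets of `ℤ/nℤ` summing to `b`,
equals `(1/n) · ∑_{d ∣ n, d odd} c_d(b) · 2^{n/d}`. -/
theorem sum_count_subsets_eq (n : ℕ) (hn : 0 < n) (b : ZMod n) :
    ((∑ k ∈ Finset.range (n + 1),
        Nat.card {s : Finset (ZMod n) // s.card = k ∧ (∑ x ∈ s, x) = b} : ℕ) : ℂ) =
      (1 / n : ℂ) * ∑ d ∈ n.divisors.filter (fun d => Odd d),
        ramanujanSum d b.val * (2 : ℂ) ^ (n / d) := by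
  haveI : NeZero n := ⟨hn.ne'⟩
  classical
  -- Step A : the LHS counts subsets with sum b
  have hA : (∑ k ∈ Finset.range (n + 1),
      Nat.card {s : Finset (ZMod n) // s.card = k ∧ (∑ x ∈ s, x) = b})
      = ((univ : Finset (Finset (ZMod n))).filter (fun s => (∑ x ∈ s, x) = b)).card := by
    have hmap : ∀ s ∈ (univ : Finset (Finset (ZMod n))).filter (fun s => (∑ x ∈ s, x) = b),
        s.card ∈ range (n + 1) := by
      intro s _
      simp only [mem_range, Nat.lt_succ_iff]
      calc s.card ≤ Fintype.card (ZMod n) := Finset.card_le_univ s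
        _ = n := ZMod.card n
    rw [Finset.card_eq_sum_card_fiberwise hmap]
    refine Finset.sum_congr rfl fun k _ => ?_
    rw [Nat.card_eq_fintype_card, Fintype.card_subtype, Finset.filter_filter]
    congr 1
    exact Finset.filter_congr fun s _ => by tauto
  rw [hA]
  set ζ : ℂ := Complex.exp (2 * Real.pi * Complex.I / (n : ℂ)) with hζdef
  have hζ : IsPrimitiveRoot ζ n := Complex.isPrimitiveRoot_exp n hn.ne'
  have hζ0 : ζ ≠ 0 := hζ.ne_zero hn.ne'
  have hn0 : (n : ℂ) ≠ 0 := Nat.cast_ne_zero.mpr hn.ne'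
  have hiff : ∀ s : Finset (ZMod n),
      ((n : ℤ) ∣ ((∑ x ∈ s, (x.val : ℤ)) - (b.val : ℤ))) ↔ ((∑ x ∈ s, x) = b) := by
    intro s
    rw [← ZMod.intCast_zmod_eq_zero_iff_dvd]
    push_cast
    rw [sub_eq_zero]
    simp [ZMod.natCast_val, ZMod.cast_id]
  have hzprod : ∀ j : ℕ,
      ∏ x : ZMod n, (1 + ζ ^ (j * x.val)) = ∏ i ∈ range n, (1 + ζ ^ (j * i)) := by
    intro j
    refine Finset.prod_nbij' (fun x => x.val) (fun i => (i : ZMod n)) ?_ ?_ ?_ ?_ ?_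
    · intro x _
      exact Finset.mem_range.mpr (ZMod.val_lt x)
    · intro i _
      exact Finset.mem_univ _
    · intro x _
      exact ZMod.natCast_rightInverse x
    · intro i hi
      exact ZMod.val_cast_of_lt (Finset.mem_range.mp hi)
    · intro x _
      rfl
  have key : (n : ℂ) *
      (((univ : Finset (Finset (ZMod n))).filter (fun s => (∑ x ∈ s, x) = b)).card : ℂ)
      = ∑ d ∈ n.divisors.filter (fun d => Odd d),
        ramanujanSum d b.val * (2 : ℂ) ^ (n / d) := by
    calc (n : ℂ) *
        (((univ : Finset (Finset (ZMod n))).filter (fun s => (∑ x ∈ s, x) = b)).card : ℂ)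
        = ∑ s ∈ (univ : Finset (Finset (ZMod n))),
            (if (∑ x ∈ s, x) = b then (n : ℂ) else 0) := by
          rw [Finset.sum_ite, Finset.sum_const, Finset.sum_const_zero, add_zero, nsmul_eq_mul,
            mul_comm]
      _ = ∑ s ∈ (univ : Finset (Finset (ZMod n))),
            (if (n : ℤ) ∣ ((∑ x ∈ s, (x.val : ℤ)) - (b.val : ℤ)) then (n : ℂ) else 0) :=
          Finset.sum_congr rfl fun s _ => (if_congr (hiff s) rfl rfl).symm
      _ = ∑ s ∈ (univ : Finset (Finset (ZMod n))), ∑ j ∈ range n,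
            ζ ^ ((j : ℤ) * ((∑ x ∈ s, (x.val : ℤ)) - (b.val : ℤ))) :=
          Finset.sum_congr rfl fun s _ => (orth hζ _).symm
      _ = ∑ j ∈ range n, ∑ s ∈ (univ : Finset (Finset (ZMod n))),
            ζ ^ ((j : ℤ) * ((∑ x ∈ s, (x.val : ℤ)) - (b.val : ℤ))) := Finset.sum_comm
      _ = ∑ j ∈ range n, ζ ^ (-((j * b.val : ℕ) : ℤ)) *
            ∏ x : ZMod n, (1 + ζ ^ (j * x.val)) := by
          refine Finset.sum_congr rfl fun j _ => ?_
          have hsplit : ∀ s : Finset (ZMod n),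
              ζ ^ ((j : ℤ) * ((∑ x ∈ s, (x.val : ℤ)) - (b.val : ℤ)))
              = (∏ x ∈ s, ζ ^ (j * x.val)) * ζ ^ (-((j * b.val : ℕ) : ℤ)) := by
            intro s
            have h1 : (j : ℤ) * ((∑ x ∈ s, (x.val : ℤ)) - (b.val : ℤ))
                = ((∑ x ∈ s, j * x.val : ℕ) : ℤ) + (-((j * b.val : ℕ) : ℤ)) := by
              push_cast
              rw [mul_sub, Finset.mul_sum]
              ring
            rw [h1, zpow_add₀ hζ0, zpow_natCast, ← Finset.prod_pow_eq_pow_sum]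
          simp_rw [hsplit]
          rw [← Finset.sum_mul, mul_comm]
          congr 1
          have hpa := Finset.prod_add (fun x : ZMod n => ζ ^ (j * x.val)) (fun _ => (1 : ℂ)) univ
          simp only [Finset.prod_const_one, mul_one, Finset.powerset_univ] at hpa
          rw [show (∏ x : ZMod n, (1 + ζ ^ (j * x.val)))
              = ∏ x : ZMod n, (ζ ^ (j * x.val) + 1) from
              Finset.prod_congr rfl fun x _ => add_comm _ _, hpa]
      _ = ∑ j ∈ range n, ζ ^ (-((j * b.val : ℕ) : ℤ)) *
            (if Odd (n / Nat.gcd j n) then (2 : ℂ) ^ (Nat.gcd j n) else 0) := by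
          refine Finset.sum_congr rfl fun j _ => ?_
          rw [hzprod j, prod_lemma hn hζ j]
      _ = ∑ d ∈ n.divisors, ∑ j ∈ (range n).filter (fun j => n / Nat.gcd j n = d),
            (ζ ^ (-((j * b.val : ℕ) : ℤ)) *
              (if Odd (n / Nat.gcd j n) then (2 : ℂ) ^ (Nat.gcd j n) else 0)) := by
          refine (Finset.sum_fiberwise_of_maps_to ?_ _).symm
          intro j _
          exact Nat.mem_divisors.mpr
            ⟨⟨Nat.gcd j n, (Nat.div_mul_cancel (Nat.gcd_dvd_right j n)).symm⟩, hn.ne'⟩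
      _ = ∑ d ∈ n.divisors, (if Odd d then ramanujanSum d b.val * (2 : ℂ) ^ (n / d) else 0) := by
          refine Finset.sum_congr rfl fun d hd => ?_
          obtain ⟨hddvd, hnne⟩ := Nat.mem_divisors.mp hd
          have hdpos : 0 < d := Nat.pos_of_dvd_of_pos hddvd hn
          set m := n / d with hm
          have hmpos : 0 < m := Nat.div_pos (Nat.le_of_dvd hn hddvd) hdpos
          have hnm : n = d * m := (Nat.mul_div_cancel' hddvd).symm
          have hgcdm : ∀ j, j ∈ (range n).filter (fun j => n / Nat.gcd j n = d) →
              Nat.gcd j n = m := by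
            intro j hj
            obtain ⟨hj1, hj2⟩ := Finset.mem_filter.mp hj
            have hgdvd : Nat.gcd j n ∣ n := Nat.gcd_dvd_right j n
            have h3 : Nat.gcd j n * d = n := by
              conv_rhs => rw [← Nat.mul_div_cancel' hgdvd, hj2]
            have h4 : d * Nat.gcd j n = d * m := by rw [mul_comm d, h3, hnm]
            exact Nat.eq_of_mul_eq_mul_left hdpos h4
          have hstep : ∑ j ∈ (range n).filter (fun j => n / Nat.gcd j n = d),
              (ζ ^ (-((j * b.val : ℕ) : ℤ)) *
                (if Odd (n / Nat.gcd j n) then (2 : ℂ) ^ (Nat.gcd j n) else 0))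
              = ∑ a ∈ (range d).filter (fun a => Nat.gcd a d = 1),
                  (ζ ^ (-((m * a * b.val : ℕ) : ℤ)) * (if Odd d then (2 : ℂ) ^ m else 0)) := by
            refine Finset.sum_nbij' (fun j => j / m) (fun a => m * a) ?_ ?_ ?_ ?_ ?_
            · intro j hj
              obtain ⟨hj1, hj2⟩ := Finset.mem_filter.mp hj
              have hjm : Nat.gcd j n = m := hgcdm j hj
              have hmj : m ∣ j := hjm ▸ Nat.gcd_dvd_left j n
              refine Finset.mem_filter.mpr ⟨Finset.mem_range.mpr ?_, ?_⟩
              · skip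
                rw [Nat.div_lt_iff_lt_mul hmpos]
                calc j < n := Finset.mem_range.mp hj1
                  _ = d * m := hnm
              · skip
                have h5 : m * Nat.gcd (j / m) d = Nat.gcd (m * (j / m)) (m * d) :=
                  (Nat.gcd_mul_left m _ _).symm
                rw [Nat.mul_div_cancel' hmj] at h5
                have h6 : m * d = n := by rw [mul_comm]; exact hnm.symm
                rw [h6, hjm] at h5
                have := h5.symm
                nlinarith [Nat.gcd (j / m) d, hmpos]
            · intro a ha
              obtain ⟨ha1, ha2⟩ := Finset.mem_filter.mp ha
              have halt : a < d := Finset.mem_range.mp ha1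
              refine Finset.mem_filter.mpr ⟨Finset.mem_range.mpr ?_, ?_⟩
              · skip
                calc m * a < m * d := by exact (Nat.mul_lt_mul_left hmpos).mpr halt
                  _ = n := by rw [mul_comm]; exact hnm.symm
              · skip
                have h5 : Nat.gcd (m * a) n = m := by
                  rw [hnm, show d * m = m * d from mul_comm d m, Nat.gcd_mul_left, ha2, mul_one]
                rw [h5, hnm]
                exact Nat.mul_div_cancel d hmpos
            · intro j hj
              have hjm : Nat.gcd j n = m := hgcdm j hj
              have hmj : m ∣ j := hjm ▸ Nat.gcd_dvd_left j n
              exact Nat.mul_div_cancel' hmj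
            · intro a _
              exact Nat.mul_div_cancel_left a hmpos
            · intro j hj
              obtain ⟨hj1, hj2⟩ := Finset.mem_filter.mp hj
              have hjm : Nat.gcd j n = m := hgcdm j hj
              have hmj : m ∣ j := hjm ▸ Nat.gcd_dvd_left j n
              rw [Nat.mul_div_cancel' hmj, hj2, hjm]
          rw [hstep, ← Finset.sum_mul]
          by_cases hodd : Odd d
          · rw [if_pos hodd, if_pos hodd, hζdef, ram_eq hdpos hmpos hnm b.val]
          · rw [if_neg hodd, if_neg hodd, mul_zero]
      _ = ∑ d ∈ n.divisors.filter (fun d => Odd d),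
            ramanujanSum d b.val * (2 : ℂ) ^ (n / d) := (Finset.sum_filter _ _).symm
  rw [div_mul_eq_mul_div, eq_div_iff hn0, mul_comm, ← key]
  ring
end

section
/- Let n be a positive integer and b ∈ Z/nZ. The number T'_n(b) of subsets of {1, 2, ..., n−1} whose element sum is congruent to b modulo n satisfies T'_n(b) = (1/(2n)) · ∑_{d | n, d odd} c_d(b) · 2^{n/d}. -/
open Finset

private lemma pow_eq_pow_of_mod_eq {ξ : ℂ} {d : ℕ} (hξ : ξ ^ d = 1) {a b : ℕ}
    (h : a % d = b % d) : ξ ^ a = ξ ^ b := by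
  conv_lhs => rw [← Nat.div_add_mod a d]
  conv_rhs => rw [← Nat.div_add_mod b d]
  rw [pow_add, pow_add, pow_mul, hξ, one_pow, pow_mul, hξ, one_pow, h]

private lemma prod_range_mul_left {f : ℕ → ℂ} {d : ℕ} (hf : ∀ j, f (j + d) = f j) :
    ∀ m : ℕ, ∏ j ∈ range (m * d), f j = (∏ j ∈ range d, f j) ^ m := by
  have hshift : ∀ m i, f (m * d + i) = f i := by
    intro m
    induction m with
    | zero => simp
    | succ m ih => intro i; rw [Nat.succ_mul, add_right_comm, hf, ih]
  intro m
  induction m with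
  | zero => simp
  | succ m ih =>
      rw [Nat.succ_mul, Finset.prod_range_add, ih, pow_succ]
      congr 1
      exact Finset.prod_congr rfl fun i _ => hshift m i

private lemma sum_zeta_pow {n : ℕ} {ζ : ℂ} (hζ : IsPrimitiveRoot ζ n) (m : ℕ) :
    ∑ k ∈ range n, ζ ^ (k * m) = if n ∣ m then (n : ℂ) else 0 := by
  simp_rw [pow_mul']
  by_cases h : n ∣ m
  · rw [if_pos h, (hζ.pow_eq_one_iff_dvd m).mpr h]
    simp
  · rw [if_neg h]
    have hne : ζ ^ m ≠ 1 := fun hc => h ((hζ.pow_eq_one_iff_dvd m).mp hc)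
    rw [geom_sum_eq hne]
    have h1 : (ζ ^ m) ^ n = 1 := by
      rw [← pow_mul, mul_comm, pow_mul, hζ.pow_eq_one, one_pow]
    rw [h1, sub_self, zero_div]

private lemma prod_one_add_eta {d : ℕ} (hd : 0 < d) {η : ℂ} (hη : IsPrimitiveRoot η d) :
    ∏ j ∈ range d, (1 + η ^ j) = 1 - (-1 : ℂ) ^ d := by
  have h := X_pow_sub_C_eq_prod hη hd (one_pow d)
  have h2 := congrArg (Polynomial.eval (-1 : ℂ)) h
  simp only [Polynomial.eval_sub, Polynomial.eval_pow, Polynomial.eval_X, Polynomial.eval_C,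
    Polynomial.eval_prod, Polynomial.eval_one, mul_one] at h2
  have h3 : ∏ i ∈ range d, ((-1 : ℂ) - η ^ i) = (-1 : ℂ) ^ d * ∏ i ∈ range d, (1 + η ^ i) := by
    calc ∏ i ∈ range d, ((-1 : ℂ) - η ^ i) = ∏ i ∈ range d, (-1 : ℂ) * (1 + η ^ i) :=
          Finset.prod_congr rfl fun i _ => by ring
      _ = (-1 : ℂ) ^ d * ∏ i ∈ range d, (1 + η ^ i) := by
          rw [Finset.prod_mul_distrib, Finset.prod_const, Finset.card_range]
  rw [h3] at h2
  have hsq : (-1 : ℂ) ^ d * (-1 : ℂ) ^ d = 1 := by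
    rw [← pow_add]
    exact Even.neg_one_pow ⟨d, rfl⟩
  linear_combination (-(-1 : ℂ) ^ d) * h2
    + (1 - ∏ j ∈ range d, (1 + η ^ j)) * hsq

private lemma coprime_sub_aux {d j : ℕ} (hj : j ≤ d) (h : Nat.gcd j d = 1) :
    Nat.gcd (d - j) d = 1 := by
  have hdj : d - (d - j) = j := Nat.sub_sub_self hj
  have h1 : Nat.gcd (d - j) d ∣ j := by
    have h0 := Nat.dvd_sub (Nat.gcd_dvd_right (d - j) d) (Nat.gcd_dvd_left (d - j) d)
    rwa [hdj] at h0
  have h2 : Nat.gcd (d - j) d ∣ Nat.gcd j d := Nat.dvd_gcd h1 (Nat.gcd_dvd_right _ _)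
  rw [h] at h2
  exact Nat.eq_one_of_dvd_one h2

private lemma ramanujan_eq_sum {n d : ℕ} (hn : n ≠ 0) (hd : d ∣ n) (hd0 : 0 < d) {c m : ℕ}
    (hcm : d ∣ (c + m)) :
    ∑ j ∈ (range d).filter (fun j => Nat.gcd j d = 1),
        (Complex.exp (2 * Real.pi * Complex.I / n)) ^ (n / d * j * c)
      = ramanujanSum d m := by
  set ζ : ℂ := Complex.exp (2 * Real.pi * Complex.I / n) with hζdef
  set ξ : ℂ := ζ ^ (n / d) with hξ
  have hζ : IsPrimitiveRoot ζ n := Complex.isPrimitiveRoot_exp n hn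
  have hξd : ξ ^ d = 1 := by
    rw [hξ, ← pow_mul, Nat.div_mul_cancel hd]
    exact hζ.pow_eq_one
  have hdC : (d : ℂ) ≠ 0 := Nat.cast_ne_zero.mpr hd0.ne'
  have hnC : (n : ℂ) ≠ 0 := Nat.cast_ne_zero.mpr hn
  have hξval : ξ = Complex.exp (2 * Real.pi * Complex.I / d) := by
    rw [hξ, hζdef, ← Complex.exp_nat_mul]
    congr 1
    rw [Nat.cast_div hd hdC]
    field_simp
  have hterm : ∀ j : ℕ, ζ ^ (n / d * j * c) = ξ ^ (j * c) := fun j => by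
    rw [hξ, ← pow_mul, mul_assoc]
  have hram : ramanujanSum d m
      = ∑ j ∈ (Icc 1 d).filter (fun j => Nat.gcd j d = 1), ξ ^ (j * m) := by
    unfold ramanujanSum
    refine Finset.sum_congr rfl fun j hj => ?_
    rw [hξval, ← Complex.exp_nat_mul]
    congr 1
    push_cast
    ring
  rw [hram]
  simp_rw [hterm]
  obtain ⟨e, he⟩ := hcm
  refine (Finset.sum_nbij' (i := fun j => d - j) (j := fun j => d - j) ?_ ?_ ?_ ?_ ?_).symm
  · intro j hj
    simp only [Finset.mem_filter, Finset.mem_Icc, Finset.mem_range] at hj ⊢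
    exact ⟨by omega, coprime_sub_aux hj.1.2 hj.2⟩
  · intro j hj
    simp only [Finset.mem_filter, Finset.mem_Icc, Finset.mem_range] at hj ⊢
    exact ⟨by omega, coprime_sub_aux (by omega) hj.2⟩
  · intro j hj
    simp only [Finset.mem_filter, Finset.mem_Icc] at hj
    show d - (d - j) = j
    omega
  · intro j hj
    simp only [Finset.mem_filter, Finset.mem_range] at hj
    show d - (d - j) = j
    omega
  · intro j hj
    simp only [Finset.mem_filter, Finset.mem_Icc] at hj
    obtain ⟨⟨hj1, hj2⟩, hjc⟩ := hj
    show ξ ^ (j * m) = ξ ^ ((d - j) * c)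
    refine pow_eq_pow_of_mod_eq hξd ?_
    have h2 : (d - j) * c + j * c = d * c := by
      rw [← Nat.add_mul, Nat.sub_add_cancel hj2]
    have h3 : d * (j * e) = j * c + j * m := by
      rw [show d * (j * e) = j * (d * e) from by ring, ← he, Nat.mul_add]
    have key2 : (d - j) * c + d * (j * e) = d * c + j * m := by omega
    calc (j * m) % d = (j * m + d * c) % d := (Nat.add_mul_mod_self_left _ _ _).symm
      _ = ((d - j) * c + d * (j * e)) % d := by rw [key2, Nat.add_comm]
      _ = ((d - j) * c) % d := Nat.add_mul_mod_self_left _ _ _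

/-- The number `T'_n(b)` of subsets of `{1, …, n−1}` whose sum is `≡ b (mod n)` equals
`(1/(2n)) · ∑_{d ∣ n, d odd} c_d(b) · 2^{n/d}`. -/
theorem count_subsets_of_Icc_pred (n : ℕ) (hn : 0 < n) (b : ZMod n) :
    (Nat.card {s : Finset ℕ // s ⊆ Finset.Icc 1 (n - 1) ∧ (∑ x ∈ s, (x : ZMod n)) = b} : ℂ) =
      (1 / (2 * n) : ℂ) * ∑ d ∈ n.divisors.filter (fun d => Odd d),
        ramanujanSum d b.val * (2 : ℂ) ^ (n / d) := by
  classical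
  haveI : NeZero n := ⟨hn.ne'⟩
  set ζ : ℂ := Complex.exp (2 * Real.pi * Complex.I / n) with hζdef
  have hζ : IsPrimitiveRoot ζ n := Complex.isPrimitiveRoot_exp n hn.ne'
  set c : ℕ := n - b.val with hcdef
  have hbval : b.val < n := ZMod.val_lt b
  have hbc : b.val + c = n := by omega
  set F : Finset (Finset ℕ) :=
    ((Icc 1 (n-1)).powerset).filter (fun s => (∑ x ∈ s, (x : ZMod n)) = b) with hF
  have hcard : (Nat.card {s : Finset ℕ // s ⊆ Finset.Icc 1 (n - 1)
      ∧ (∑ x ∈ s, (x : ZMod n)) = b}) = F.card := by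
    rw [Nat.card_congr (Equiv.subtypeEquivRight (fun s => ?_)), Nat.card_eq_finsetCard]
    simp [hF, Finset.mem_filter, Finset.mem_powerset]
  set S : ℂ := ∑ k ∈ range n, ζ ^ (k * c) * ∏ j ∈ range n, (1 + ζ ^ (k * j)) with hS
  -- Claim 1 : S = 2 * n * F.card
  have hrange : range n = insert 0 (Icc 1 (n-1)) := by
    ext x
    simp only [mem_range, mem_insert, mem_Icc]
    omega
  have hprod2 : ∀ k : ℕ, ∏ j ∈ range n, (1 + ζ ^ (k * j))
      = 2 * ∑ s ∈ (Icc 1 (n-1)).powerset, ζ ^ (k * ∑ x ∈ s, x) := by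
    intro k
    rw [hrange, Finset.prod_insert (by simp), mul_zero, pow_zero]
    norm_num
    calc ∏ j ∈ Icc 1 (n-1), (1 + ζ ^ (k*j)) = ∏ j ∈ Icc 1 (n-1), (ζ ^ (k*j) + 1) := by
          simp [add_comm]
      _ = ∑ s ∈ (Icc 1 (n-1)).powerset, ∏ j ∈ s, ζ ^ (k*j) := by
          have h := Finset.prod_add (fun j => ζ ^ (k * j)) (fun _ => (1:ℂ)) (Icc 1 (n-1))
          simpa using h
      _ = ∑ s ∈ (Icc 1 (n-1)).powerset, ζ ^ (k * ∑ x ∈ s, x) := by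
          refine sum_congr rfl fun s hs => ?_
          rw [Finset.prod_pow_eq_pow_sum, Finset.mul_sum]
  have hiff : ∀ s : Finset ℕ,
      (n ∣ (c + ∑ x ∈ s, x)) ↔ ((∑ x ∈ s, (x : ZMod n)) = b) := by
    intro s
    have hcz : (c : ZMod n) = -b := by
      have h0 : ((b.val + c : ℕ) : ZMod n) = 0 := by rw [hbc]; exact ZMod.natCast_self n
      push_cast at h0
      rw [ZMod.natCast_val, ZMod.cast_id] at h0
      exact eq_neg_of_add_eq_zero_right h0
    rw [← ZMod.natCast_eq_zero_iff]
    push_cast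
    rw [hcz, neg_add_eq_zero, eq_comm]
  have claim1 : S = 2 * ((n:ℂ) * F.card) := by
    rw [hS]
    calc ∑ k ∈ range n, ζ ^ (k * c) * ∏ j ∈ range n, (1 + ζ ^ (k * j))
        = ∑ k ∈ range n, 2 * ∑ s ∈ (Icc 1 (n-1)).powerset, ζ ^ (k * (c + ∑ x ∈ s, x)) := by
          refine sum_congr rfl fun k _ => ?_
          rw [hprod2 k, mul_left_comm, Finset.mul_sum]
          congr 1
          refine sum_congr rfl fun s _ => ?_
          rw [mul_add, pow_add]
      _ = 2 * ∑ s ∈ (Icc 1 (n-1)).powerset, ∑ k ∈ range n, ζ ^ (k * (c + ∑ x ∈ s, x)) := by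
          rw [← Finset.mul_sum, Finset.sum_comm]
      _ = 2 * ∑ s ∈ (Icc 1 (n-1)).powerset,
            (if (∑ x ∈ s, (x : ZMod n)) = b then (n:ℂ) else 0) := by
          congr 1
          refine sum_congr rfl fun s _ => ?_
          rw [sum_zeta_pow hζ, if_congr (hiff s) rfl rfl]
      _ = 2 * ((n:ℂ) * F.card) := by
          rw [← Finset.sum_filter, ← hF, Finset.sum_const, nsmul_eq_mul]; ring
  -- Claim 2
  have hQ : ∀ k : ℕ, ∏ j ∈ range n, (1 + ζ ^ (k * j)) =
      if Odd (n / Nat.gcd n k) then (2:ℂ) ^ (Nat.gcd n k) else 0 := by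
    intro k
    set g := Nat.gcd n k with hg
    have hgdvd : g ∣ n := Nat.gcd_dvd_left n k
    have hgpos : 0 < g := Nat.gcd_pos_of_pos_left k hn
    set d := n / g with hd
    have hdpos : 0 < d := Nat.div_pos (Nat.le_of_dvd hn hgdvd) hgpos
    have hdg : d * g = n := Nat.div_mul_cancel hgdvd
    have hfin : IsOfFinOrder ζ := isOfFinOrder_iff_pow_eq_one.mpr ⟨n, hn, hζ.pow_eq_one⟩
    have hordζ : orderOf ζ = n := (hζ.eq_orderOf).symm
    have hord : orderOf (ζ ^ k) = d := by
      rw [IsOfFinOrder.orderOf_pow _ _ hfin, hordζ]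
    have hη : IsPrimitiveRoot (ζ ^ k) d := hord ▸ IsPrimitiveRoot.orderOf (ζ ^ k)
    have hη1 : (ζ ^ k) ^ d = 1 := hη.pow_eq_one
    have hper : ∀ j : ℕ, (1 + (ζ^k) ^ (j + d)) = 1 + (ζ^k) ^ j := by
      intro j; rw [pow_add, hη1, mul_one]
    calc ∏ j ∈ range n, (1 + ζ ^ (k * j)) = ∏ j ∈ range (g * d), (1 + (ζ^k) ^ j) := by
          rw [show g * d = n from by rw [mul_comm]; exact hdg]
          exact Finset.prod_congr rfl fun j _ => by rw [pow_mul]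
      _ = (∏ j ∈ range d, (1 + (ζ^k) ^ j)) ^ g := prod_range_mul_left hper g
      _ = (1 - (-1:ℂ) ^ d) ^ g := by rw [prod_one_add_eta hdpos hη]
      _ = (if Odd d then (2:ℂ) ^ g else 0) := by
          by_cases hodd : Odd d
          · rw [if_pos hodd, hodd.neg_one_pow]; norm_num
          · rw [if_neg hodd, (Nat.not_odd_iff_even.mp hodd).neg_one_pow, sub_self,
              zero_pow hgpos.ne']
  have claim2 : S = ∑ d ∈ n.divisors.filter (fun d => Odd d),
      ramanujanSum d b.val * (2:ℂ) ^ (n / d) := by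
    rw [hS]
    have hGrw : ∑ k ∈ range n, ζ ^ (k * c) * ∏ j ∈ range n, (1 + ζ ^ (k * j))
        = ∑ k ∈ range n,
            ζ ^ (k * c) * (if Odd (n / Nat.gcd n k) then (2:ℂ) ^ (Nat.gcd n k) else 0) :=
      Finset.sum_congr rfl fun k _ => by rw [hQ k]
    rw [hGrw]
    have regroup : ∑ k ∈ range n,
          ζ ^ (k * c) * (if Odd (n / Nat.gcd n k) then (2:ℂ) ^ (Nat.gcd n k) else 0)
        = ∑ d ∈ n.divisors, ∑ j ∈ (range d).filter (fun j => Nat.gcd j d = 1),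
            ζ ^ (n / d * j * c) * (if Odd d then (2:ℂ) ^ (n / d) else 0) := by
      rw [Finset.sum_sigma']
      refine (Finset.sum_nbij' (i := fun (p : Σ _ : ℕ, ℕ) => n / p.1 * p.2)
        (j := fun k => ⟨n / Nat.gcd n k, k / Nat.gcd n k⟩) ?_ ?_ ?_ ?_ ?_).symm
      · rintro ⟨d, j⟩ hp
        simp only [Finset.mem_sigma, Nat.mem_divisors, Finset.mem_filter,
          Finset.mem_range] at hp
        obtain ⟨⟨hdvd, _⟩, hj, hjc⟩ := hp
        have hndpos : 0 < n / d := Nat.div_pos (Nat.le_of_dvd hn hdvd)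
          (Nat.pos_of_dvd_of_pos hdvd hn)
        simp only [Finset.mem_range]
        calc n / d * j < n / d * d := (Nat.mul_lt_mul_left hndpos).mpr hj
          _ = n := Nat.div_mul_cancel hdvd
      · intro k hk
        simp only [Finset.mem_range] at hk
        have hgdvd : Nat.gcd n k ∣ n := Nat.gcd_dvd_left n k
        have hgpos : 0 < Nat.gcd n k := Nat.gcd_pos_of_pos_left k hn
        simp only [Finset.mem_sigma, Nat.mem_divisors, Finset.mem_filter, Finset.mem_range]
        refine ⟨⟨⟨Nat.gcd n k, (Nat.div_mul_cancel hgdvd).symm⟩, hn.ne'⟩,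
          Nat.div_lt_div_of_lt_of_dvd hgdvd hk, ?_⟩
        have h := Nat.coprime_div_gcd_div_gcd (m := k) (n := n)
          (by rwa [Nat.gcd_comm] at hgpos)
        rwa [Nat.gcd_comm k n] at h
      · rintro ⟨d, j⟩ hp
        simp only [Finset.mem_sigma, Nat.mem_divisors, Finset.mem_filter,
          Finset.mem_range] at hp
        obtain ⟨⟨hdvd, _⟩, hj, hjc⟩ := hp
        have hdpos' : 0 < d := Nat.pos_of_dvd_of_pos hdvd hn
        have hm : n / d * d = n := Nat.div_mul_cancel hdvd
        have hgcd : Nat.gcd n (n / d * j) = n / d := by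
          rw [← hm, Nat.mul_div_cancel _ hdpos', Nat.gcd_mul_left, Nat.gcd_comm d j,
            hjc, mul_one]
        have hndpos : 0 < n / d := Nat.div_pos (Nat.le_of_dvd hn hdvd)
          (Nat.pos_of_dvd_of_pos hdvd hn)
        simp only [hgcd, Nat.div_div_self hdvd hn.ne', Nat.mul_div_cancel_left j hndpos]
      · intro k hk
        have hgdvd : Nat.gcd n k ∣ n := Nat.gcd_dvd_left n k
        show n / (n / Nat.gcd n k) * (k / Nat.gcd n k) = k
        rw [Nat.div_div_self hgdvd hn.ne', Nat.mul_div_cancel' (Nat.gcd_dvd_right n k)]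
      · rintro ⟨d, j⟩ hp
        simp only [Finset.mem_sigma, Nat.mem_divisors, Finset.mem_filter,
          Finset.mem_range] at hp
        obtain ⟨⟨hdvd, _⟩, hj, hjc⟩ := hp
        have hdpos' : 0 < d := Nat.pos_of_dvd_of_pos hdvd hn
        have hm : n / d * d = n := Nat.div_mul_cancel hdvd
        have hgcd : Nat.gcd n (n / d * j) = n / d := by
          rw [← hm, Nat.mul_div_cancel _ hdpos', Nat.gcd_mul_left, Nat.gcd_comm d j,
            hjc, mul_one]
        show ζ ^ (n / d * j * c) * (if Odd d then (2:ℂ) ^ (n / d) else 0)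
          = ζ ^ (n / d * j * c) * (if Odd (n / Nat.gcd n (n / d * j))
              then (2:ℂ) ^ (Nat.gcd n (n / d * j)) else 0)
        rw [hgcd, Nat.div_div_self hdvd hn.ne']
    rw [regroup, Finset.sum_filter]
    refine sum_congr rfl fun d hd => ?_
    have hdvd : d ∣ n := (Nat.mem_divisors.mp hd).1
    have hdpos : 0 < d := Nat.pos_of_mem_divisors hd
    by_cases hodd : Odd d
    · simp only [if_pos hodd]
      rw [← Finset.sum_mul]
      congr 1
      rw [← hζdef] at *
      exact ramanujan_eq_sum hn.ne' hdvd hdpos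
        (by rw [Nat.add_comm, hbc]; exact hdvd)
    · simp only [if_neg hodd, mul_zero, Finset.sum_const_zero]
  -- conclusion
  rw [hcard]
  have h2n : (2 * (n:ℂ)) ≠ 0 := mul_ne_zero two_ne_zero (Nat.cast_ne_zero.mpr hn.ne')
  have key : 2 * ((n:ℂ) * F.card) = ∑ d ∈ n.divisors.filter (fun d => Odd d),
      ramanujanSum d b.val * (2:ℂ) ^ (n / d) := claim1 ▸ claim2
  rw [← key]
  field_simp
  rw [mul_div_cancel_right₀ _ (Nat.cast_ne_zero.mpr hn.ne')]
end

section
/- Let n be a positive integer and 0 ≤ b ≤ n an integer. The number of codewords in the Varshamov–Tenengolts code VT_b(n) satisfies |VT_b(n)| = (1/(2(n+1))) · ∑_{d | n+1, d odd} c_d(b) · 2^{(n+1)/d}. -/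
open Finset

lemma prod_periodic_aux {M : Type*} [CommMonoid M] (f : ℕ → M) (d : ℕ)
    (hf : ∀ i, f (i + d) = f i) (m : ℕ) :
    ∏ i ∈ Finset.range (m * d), f i = (∏ i ∈ Finset.range d, f i) ^ m := by
  have key : ∀ q i, f (q * d + i) = f i := by
    intro q
    induction q with
    | zero => simp
    | succ q ihq =>
      intro i
      have h : (q + 1) * d + i = q * d + i + d := by ring
      rw [h, hf, ihq]
  induction m with
  | zero => simp
  | succ m ih =>
    rw [Nat.succ_mul, Finset.prod_range_add, ih, pow_succ]
    congr 1
    exact Finset.prod_congr rfl fun i _ => key m i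

lemma prod_one_add_pow {ξ : ℂ} {d : ℕ} (hd : 0 < d) (hξ : IsPrimitiveRoot ξ d) :
    ∏ i ∈ Finset.range d, (1 + ξ ^ i) = 1 - (-1 : ℂ) ^ d := by
  have him : (Finset.range d).image (ξ ^ ·) = Polynomial.nthRootsFinset d (1 : ℂ) := by
    apply Finset.eq_of_subset_of_card_le
    · intro x hx
      simp only [Finset.mem_image, Finset.mem_range] at hx
      obtain ⟨i, _, rfl⟩ := hx
      rw [Polynomial.mem_nthRootsFinset hd (1 : ℂ), ← pow_mul, mul_comm, pow_mul, hξ.pow_eq_one, one_pow]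
    · rw [hξ.card_nthRootsFinset, Finset.card_image_of_injOn]
      · simp
      · intro i hi j hj h
        exact hξ.pow_inj (Finset.mem_range.1 hi) (Finset.mem_range.1 hj) h
  have hpoly := Polynomial.X_pow_sub_one_eq_prod hd hξ
  have heval := congrArg (Polynomial.eval (-1 : ℂ)) hpoly
  rw [Polynomial.eval_prod] at heval
  simp only [Polynomial.eval_sub, Polynomial.eval_pow, Polynomial.eval_X, Polynomial.eval_one,
    Polynomial.eval_C] at heval
  rw [← him, Finset.prod_image (fun i hi j hj h =>
    hξ.pow_inj (Finset.mem_range.1 hi) (Finset.mem_range.1 hj) h)] at heval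
  have : ∏ i ∈ Finset.range d, (1 + ξ ^ i) =
      ∏ i ∈ Finset.range d, ((-1 : ℂ) * (-1 - ξ ^ i)) :=
    Finset.prod_congr rfl fun i _ => by ring
  rw [this, Finset.prod_mul_distrib, Finset.prod_const, Finset.card_range, ← heval]
  have h2 : ((-1 : ℂ)) ^ d * ((-1 : ℂ)) ^ d = 1 := by
    rw [← pow_add, ← two_mul, pow_mul]; norm_num
  linear_combination h2

/-- **Ginzburg's formula** (binary case). The number of codewords in the
Varshamov–Tenengolts code `VT_b(n)` is `(1/(2(n+1))) · ∑_{d ∣ n+1, d odd} c_d(b) · 2^{(n+1)/d}`. -/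
theorem card_varshamovTenengolts (n : ℕ) (hn : 0 < n) (b : ℕ) (hb : b ≤ n) :
    (Nat.card {y : Fin n → Fin 2 //
        ((∑ i : Fin n, ((i : ℕ) + 1) * (y i : ℕ) : ℕ) : ZMod (n + 1)) = (b : ZMod (n + 1))} : ℂ) =
      (1 / (2 * (n + 1)) : ℂ) * ∑ d ∈ (n + 1).divisors.filter (fun d => Odd d),
        ramanujanSum d b * (2 : ℂ) ^ ((n + 1) / d) := by
  have hN : (n + 1 : ℕ) ≠ 0 := Nat.succ_ne_zero n
  set S : (Fin n → Fin 2) → ℕ := fun y => ∑ i : Fin n, ((i : ℕ) + 1) * (y i : ℕ) with hS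
  set ω : ℂ := Complex.exp (2 * ↑Real.pi * Complex.I / ((n + 1 : ℕ) : ℂ)) with hωdef
  have hω : IsPrimitiveRoot ω (n + 1) := Complex.isPrimitiveRoot_exp (n + 1) hN
  have hω0 : ω ≠ 0 := Complex.exp_ne_zero _
  have hNC : ((n + 1 : ℕ) : ℂ) ≠ 0 := Nat.cast_ne_zero.2 hN
  -- Step A: the count as a sum of indicators
  have hcount : (Nat.card {y : Fin n → Fin 2 // ((S y : ℕ) : ZMod (n + 1)) = (b : ZMod (n + 1))} : ℂ)
      = ∑ y : Fin n → Fin 2, if ((S y : ZMod (n + 1)) = (b : ZMod (n + 1))) then (1 : ℂ) else 0 := by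
    rw [Nat.card_eq_fintype_card, Fintype.card_subtype, Finset.card_filter]
    push_cast
    rfl
  -- orthogonality of characters
  have ortho : ∀ m : ℤ, ∑ k ∈ Finset.range (n + 1), (ω ^ m) ^ k
      = if ((n + 1 : ℕ) : ℤ) ∣ m then ((n + 1 : ℕ) : ℂ) else 0 := by
    intro m
    by_cases h : ((n + 1 : ℕ) : ℤ) ∣ m
    · rw [if_pos h, (hω.zpow_eq_one_iff_dvd m).2 h]
      simp
    · rw [if_neg h]
      have h1 : ω ^ m ≠ 1 := fun hh => h ((hω.zpow_eq_one_iff_dvd m).1 hh)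
      rw [geom_sum_eq h1]
      have h2 : (ω ^ m) ^ (n + 1) = 1 := by
        rw [← zpow_natCast (ω ^ m) (n + 1), ← zpow_mul, mul_comm, zpow_mul, zpow_natCast,
          hω.pow_eq_one, one_zpow]
      rw [h2, sub_self, zero_div]
  -- indicator formula
  have hind : ∀ s : ℕ,
      (if ((s : ZMod (n + 1)) = (b : ZMod (n + 1))) then (1 : ℂ) else 0)
      = (((n + 1 : ℕ) : ℂ))⁻¹ * ∑ k ∈ Finset.range (n + 1), (ω ^ ((b : ℤ) - (s : ℤ))) ^ k := by
    intro s
    rw [ortho]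
    have hcond : ((s : ZMod (n + 1)) = (b : ZMod (n + 1))) ↔ ((n + 1 : ℕ) : ℤ) ∣ ((b : ℤ) - (s : ℤ)) := by
      rw [ZMod.natCast_eq_natCast_iff, Nat.modEq_iff_dvd]
    by_cases h : ((n + 1 : ℕ) : ℤ) ∣ ((b : ℤ) - (s : ℤ))
    · rw [if_pos h, if_pos (hcond.2 h), inv_mul_cancel₀ hNC]
    · rw [if_neg h, if_neg fun hc => h (hcond.1 hc), mul_zero]
  -- swap the sums
  have step1 : (Nat.card {y : Fin n → Fin 2 // ((S y : ℕ) : ZMod (n + 1)) = (b : ZMod (n + 1))} : ℂ)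
      = (((n + 1 : ℕ) : ℂ))⁻¹ * ∑ k ∈ Finset.range (n + 1),
          ∑ y : Fin n → Fin 2, (ω ^ ((b : ℤ) - (S y : ℤ))) ^ k := by
    rw [hcount, Finset.sum_congr rfl fun y _ => hind (S y), ← Finset.mul_sum, Finset.sum_comm]
  -- inner sum over codewords, for fixed k
  have inner : ∀ k : ℕ, ∑ y : Fin n → Fin 2, (ω ^ ((b : ℤ) - (S y : ℤ))) ^ k
      = ω ^ ((b : ℤ) * k) * ∏ i ∈ Finset.range n, (1 + (ω ^ (-(k : ℤ))) ^ (i + 1)) := by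
    intro k
    have e1 : ∀ m : ℤ, (ω ^ m) ^ k = ω ^ (m * k) := fun m => by
      rw [← zpow_natCast (ω ^ m) k, ← zpow_mul]
    calc ∑ y : Fin n → Fin 2, (ω ^ ((b : ℤ) - (S y : ℤ))) ^ k
        = ∑ y : Fin n → Fin 2, ω ^ ((b : ℤ) * k) * (ω ^ (-(k : ℤ))) ^ (S y) := by
          refine Finset.sum_congr rfl fun y _ => ?_
          rw [e1]
          have h3 : ((b : ℤ) - (S y : ℤ)) * k = (b : ℤ) * k + (-(k : ℤ)) * (S y : ℕ) := by
            push_cast; ring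
          rw [h3, zpow_add₀ hω0]
          congr 1
          rw [zpow_mul, zpow_natCast]
      _ = ω ^ ((b : ℤ) * k) * ∑ y : Fin n → Fin 2,
            ∏ i : Fin n, ((ω ^ (-(k : ℤ))) ^ ((i : ℕ) + 1)) ^ (y i : ℕ) := by
          rw [← Finset.mul_sum]
          congr 1
          refine Finset.sum_congr rfl fun y _ => ?_
          rw [hS, ← Finset.prod_pow_eq_pow_sum]
          exact Finset.prod_congr rfl fun i _ => by rw [pow_mul]
      _ = ω ^ ((b : ℤ) * k) * ∏ i : Fin n, (1 + (ω ^ (-(k : ℤ))) ^ ((i : ℕ) + 1)) := by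
          congr 1
          have hrhs : (∏ i : Fin n, (1 + (ω ^ (-(k : ℤ))) ^ ((i : ℕ) + 1)))
              = ∏ i : Fin n, ∑ t ∈ (Finset.univ : Finset (Fin 2)),
                  ((ω ^ (-(k : ℤ))) ^ ((i : ℕ) + 1)) ^ (t : ℕ) := by
            refine Finset.prod_congr rfl fun i _ => ?_
            rw [Fin.sum_univ_two]
            norm_num
          rw [hrhs, Finset.prod_univ_sum, Fintype.piFinset_univ]
      _ = ω ^ ((b : ℤ) * k) * ∏ i ∈ Finset.range n, (1 + (ω ^ (-(k : ℤ))) ^ (i + 1)) := by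
          congr 1
          exact Fin.prod_univ_eq_prod_range (fun j => 1 + (ω ^ (-(k : ℤ))) ^ (j + 1)) n
  -- product evaluation for each k
  have hprod : ∀ k ∈ Finset.range (n + 1),
      ∏ i ∈ Finset.range n, (1 + (ω ^ (-(k : ℤ))) ^ (i + 1))
      = (if Odd ((n + 1) / Nat.gcd (n + 1) k) then (2 : ℂ) ^ (Nat.gcd (n + 1) k) else 0) / 2 := by
    intro k hk
    rw [Finset.mem_range] at hk
    set ξ : ℂ := ω ^ (-(k : ℤ)) with hξdef
    have hξeq : ξ = ω ^ ((n + 1) - k) := by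
      have h1 : ((n + 1 - k : ℕ) : ℤ) = ((n + 1 : ℕ) : ℤ) + (-(k : ℤ)) := by
        push_cast [le_of_lt hk]; ring
      rw [hξdef, ← zpow_natCast ω ((n + 1) - k), h1, zpow_add₀ hω0, zpow_natCast,
        hω.pow_eq_one, one_mul]
    have hgcd : Nat.gcd (n + 1) ((n + 1) - k) = Nat.gcd (n + 1) k :=
      Nat.gcd_self_sub_right (le_of_lt hk)
    have hξN : ξ ^ (n + 1) = 1 := by
      rw [hξeq, ← pow_mul, mul_comm, pow_mul, hω.pow_eq_one, one_pow]
    set d := orderOf ξ with hddef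
    have hdd : d ∣ (n + 1) := orderOf_dvd_of_pow_eq_one hξN
    have hdval : d = (n + 1) / Nat.gcd (n + 1) k := by
      rw [hddef, hξeq, orderOf_pow' ω (Nat.sub_ne_zero_of_lt hk), ← hω.eq_orderOf, hgcd]
    have hdpos : 0 < d :=
      (isOfFinOrder_iff_pow_eq_one.2 ⟨n + 1, Nat.succ_pos n, hξN⟩).orderOf_pos
    have hprim : IsPrimitiveRoot ξ d := IsPrimitiveRoot.orderOf ξ
    have hper : ∀ i, (fun i => 1 + ξ ^ i) (i + d) = (fun i => 1 + ξ ^ i) i := fun i => by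
      simp only
      rw [pow_add, pow_orderOf_eq_one, mul_one]
    have hP : ∏ i ∈ Finset.range (n + 1), (1 + ξ ^ i) = (1 - (-1 : ℂ) ^ d) ^ ((n + 1) / d) := by
      have h4 := prod_periodic_aux (fun i => 1 + ξ ^ i) d hper ((n + 1) / d)
      rw [Nat.div_mul_cancel hdd] at h4
      rw [h4, prod_one_add_pow hdpos hprim]
    have hshift : ∏ i ∈ Finset.range n, (1 + ξ ^ (i + 1))
        = (∏ i ∈ Finset.range (n + 1), (1 + ξ ^ i)) / 2 := by
      rw [Finset.prod_range_succ' (fun i => 1 + ξ ^ i) n]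
      norm_num
    have hNd : (n + 1) / d = Nat.gcd (n + 1) k := by
      rw [hdval]; exact Nat.div_div_self (Nat.gcd_dvd_left _ _) hN
    rw [hshift, hP, ← hdval, hNd]
    rcases Nat.even_or_odd d with he | ho
    · rw [if_neg (by simp [Nat.not_odd_iff_even.2 he]), he.neg_one_pow, sub_self,
        zero_pow (by simp [Nat.gcd_eq_zero_iff]), zero_div]
    · rw [if_pos ho, ho.neg_one_pow, ← hNd]
      norm_num
  -- the per-k term
  set T : ℕ → ℂ := fun k =>
    if Odd ((n + 1) / Nat.gcd (n + 1) k) then ω ^ ((b : ℤ) * k) * (2 : ℂ) ^ (Nat.gcd (n + 1) k)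
    else 0 with hT
  have step2 : (Nat.card {y : Fin n → Fin 2 //
        ((S y : ℕ) : ZMod (n + 1)) = (b : ZMod (n + 1))} : ℂ)
      = (((n + 1 : ℕ) : ℂ))⁻¹ * ((∑ k ∈ Finset.range (n + 1), T k) / 2) := by
    rw [step1]
    congr 1
    rw [Finset.sum_div]
    refine Finset.sum_congr rfl fun k hk => ?_
    rw [inner k, hprod k hk]
    simp only [hT]
    by_cases h : Odd ((n + 1) / Nat.gcd (n + 1) k)
    · rw [if_pos h, if_pos h]; ring
    · rw [if_neg h, if_neg h]; ring
  have h0 : T 0 = T (n + 1) := by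
    have eN : ω ^ ((b : ℤ) * ((n + 1 : ℕ) : ℤ)) = 1 := by
      rw [show (b : ℤ) * ((n + 1 : ℕ) : ℤ) = ((b * (n + 1) : ℕ) : ℤ) by push_cast; ring,
        zpow_natCast, mul_comm, pow_mul, hω.pow_eq_one, one_pow]
    simp only [hT, Nat.gcd_zero_right, Nat.gcd_self, Nat.div_self (Nat.succ_pos n),
      Nat.cast_zero, mul_zero, zpow_zero]
    rw [if_pos odd_one, if_pos odd_one, eN]
  have step3 : ∑ k ∈ Finset.range (n + 1), T k = ∑ k ∈ Finset.Icc 1 (n + 1), T k := by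
    have hr : Finset.range (n + 1) = insert 0 (Finset.Icc 1 n) := by
      ext x; simp only [Finset.mem_range, Finset.mem_insert, Finset.mem_Icc]; omega
    have hi : Finset.Icc 1 (n + 1) = insert (n + 1) (Finset.Icc 1 n) := by
      ext x; simp only [Finset.mem_insert, Finset.mem_Icc]; omega
    rw [hr, hi, Finset.sum_insert (by simp), Finset.sum_insert (by simp), h0]
  have step4 : ∑ k ∈ Finset.Icc 1 (n + 1), T k
      = ∑ p ∈ (Nat.divisors (n + 1)).sigma
          (fun d => (Finset.Icc 1 d).filter (fun j => Nat.gcd j d = 1)),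
          (if Odd p.1 then
            Complex.exp (2 * ↑Real.pi * Complex.I * (p.2 : ℂ) * (b : ℂ) / (p.1 : ℂ)) *
              (2 : ℂ) ^ ((n + 1) / p.1) else 0) := by
    refine Finset.sum_nbij'
      (i := fun k => ⟨(n + 1) / Nat.gcd (n + 1) k, k / Nat.gcd (n + 1) k⟩)
      (j := fun p => p.2 * ((n + 1) / p.1)) ?_ ?_ ?_ ?_ ?_
    · intro k hk
      rw [Finset.mem_Icc] at hk
      have hg : 0 < Nat.gcd (n + 1) k := Nat.gcd_pos_of_pos_left k (Nat.succ_pos n)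
      have hgk : Nat.gcd (n + 1) k ∣ k := Nat.gcd_dvd_right _ _
      rw [Finset.mem_sigma, Nat.mem_divisors, Finset.mem_filter, Finset.mem_Icc]
      refine ⟨⟨Nat.div_dvd_of_dvd (Nat.gcd_dvd_left _ _), hN⟩,
        ⟨Nat.div_pos (Nat.le_of_dvd (by omega) hgk) hg, Nat.div_le_div_right hk.2⟩, ?_⟩
      exact (Nat.coprime_div_gcd_div_gcd (m := n + 1) (n := k) hg).symm
    · rintro ⟨d, j⟩ hp
      rw [Finset.mem_sigma, Nat.mem_divisors, Finset.mem_filter, Finset.mem_Icc] at hp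
      obtain ⟨⟨hdvd, -⟩, ⟨hj1, hjd⟩, -⟩ := hp
      have hd0 : 0 < d := lt_of_lt_of_le hj1 hjd
      have he0 : 0 < (n + 1) / d := Nat.div_pos (Nat.le_of_dvd (Nat.succ_pos n) hdvd) hd0
      rw [Finset.mem_Icc]
      refine ⟨Nat.mul_pos hj1 he0, ?_⟩
      calc j * ((n + 1) / d) ≤ d * ((n + 1) / d) := Nat.mul_le_mul_right _ hjd
        _ = n + 1 := Nat.mul_div_cancel' hdvd
    · intro k hk
      simp only
      rw [Nat.div_div_self (Nat.gcd_dvd_left _ _) hN,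
        Nat.div_mul_cancel (Nat.gcd_dvd_right _ _)]
    · rintro ⟨d, j⟩ hp
      rw [Finset.mem_sigma, Nat.mem_divisors, Finset.mem_filter, Finset.mem_Icc] at hp
      obtain ⟨⟨hdvd, -⟩, ⟨hj1, hjd⟩, hco⟩ := hp
      have hd0 : 0 < d := lt_of_lt_of_le hj1 hjd
      have he0 : 0 < (n + 1) / d := Nat.div_pos (Nat.le_of_dvd (Nat.succ_pos n) hdvd) hd0
      have hde : d * ((n + 1) / d) = n + 1 := Nat.mul_div_cancel' hdvd
      have hgcd2 : Nat.gcd (n + 1) (j * ((n + 1) / d)) = (n + 1) / d := by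
        set e := (n + 1) / d with hedef
        calc Nat.gcd (n + 1) (j * e) = Nat.gcd (d * e) (j * e) := by rw [hde]
          _ = Nat.gcd d j * e := Nat.gcd_mul_right d e j
          _ = e := by rw [Nat.gcd_comm d j, hco, one_mul]
      have h1 : (n + 1) / Nat.gcd (n + 1) (j * ((n + 1) / d)) = d := by
        rw [hgcd2]; exact Nat.div_div_self hdvd hN
      have h2 : j * ((n + 1) / d) / Nat.gcd (n + 1) (j * ((n + 1) / d)) = j := by
        rw [hgcd2]; exact Nat.mul_div_cancel j he0
      simp only [h1, h2]
    · intro k hk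
      rw [Finset.mem_Icc] at hk
      have hg : 0 < Nat.gcd (n + 1) k := Nat.gcd_pos_of_pos_left k (Nat.succ_pos n)
      have hkg : k / Nat.gcd (n + 1) k * Nat.gcd (n + 1) k = k :=
        Nat.div_mul_cancel (Nat.gcd_dvd_right _ _)
      have hNg : (n + 1) / Nat.gcd (n + 1) k * Nat.gcd (n + 1) k = n + 1 :=
        Nat.div_mul_cancel (Nat.gcd_dvd_left _ _)
      have hNdd : (n + 1) / ((n + 1) / Nat.gcd (n + 1) k) = Nat.gcd (n + 1) k :=
        Nat.div_div_self (Nat.gcd_dvd_left _ _) hN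
      have he0 : 0 < (n + 1) / Nat.gcd (n + 1) k :=
        Nat.div_pos (Nat.le_of_dvd (Nat.succ_pos n) (Nat.gcd_dvd_left _ _)) hg
      simp only [hT]
      rw [hNdd]
      by_cases h : Odd ((n + 1) / Nat.gcd (n + 1) k)
      · rw [if_pos h, if_pos h]
        congr 1
        have hωk : ω ^ ((b : ℤ) * k)
            = Complex.exp (((b * k : ℕ) : ℂ) * (2 * ↑Real.pi * Complex.I / ((n + 1 : ℕ) : ℂ))) := by
          rw [show (b : ℤ) * k = ((b * k : ℕ) : ℤ) by push_cast; ring, zpow_natCast, hωdef,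
            ← Complex.exp_nat_mul]
        rw [hωk]
        congr 1
        have c1 : ((k : ℕ) : ℂ) = ((k / Nat.gcd (n + 1) k : ℕ) : ℂ) * ((Nat.gcd (n + 1) k : ℕ) : ℂ) := by
          exact_mod_cast congrArg (fun t : ℕ => (t : ℂ)) hkg.symm
        have c2 : ((n + 1 : ℕ) : ℂ)
            = (((n + 1) / Nat.gcd (n + 1) k : ℕ) : ℂ) * ((Nat.gcd (n + 1) k : ℕ) : ℂ) := by
          exact_mod_cast congrArg (fun t : ℕ => (t : ℂ)) hNg.symm
        have hgC : ((Nat.gcd (n + 1) k : ℕ) : ℂ) ≠ 0 := Nat.cast_ne_zero.2 hg.ne'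
        have heC : (((n + 1) / Nat.gcd (n + 1) k : ℕ) : ℂ) ≠ 0 := Nat.cast_ne_zero.2 he0.ne'
        rw [Nat.cast_mul, c1, c2]
        field_simp
      · rw [if_neg h, if_neg h]
  have step5 : ∑ p ∈ (Nat.divisors (n + 1)).sigma
          (fun d => (Finset.Icc 1 d).filter (fun j => Nat.gcd j d = 1)),
          (if Odd p.1 then
            Complex.exp (2 * ↑Real.pi * Complex.I * (p.2 : ℂ) * (b : ℂ) / (p.1 : ℂ)) *
              (2 : ℂ) ^ ((n + 1) / p.1) else 0)
      = ∑ d ∈ (n + 1).divisors.filter (fun d => Odd d),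
          ramanujanSum d b * (2 : ℂ) ^ ((n + 1) / d) := by
    rw [Finset.sum_sigma]
    refine Eq.trans (Finset.sum_congr rfl fun d hd => ?_) (Finset.sum_filter _ _).symm
    by_cases h : Odd d
    · simp only [h, if_true]
      rw [← Finset.sum_mul]
      rfl
    · simp only [h, if_false]
      exact Finset.sum_const_zero
  have final : (Nat.card {y : Fin n → Fin 2 //
        ((S y : ℕ) : ZMod (n + 1)) = (b : ZMod (n + 1))} : ℂ)
      = (1 / (2 * (n + 1)) : ℂ) * ∑ d ∈ (n + 1).divisors.filter (fun d => Odd d),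
          ramanujanSum d b * (2 : ℂ) ^ ((n + 1) / d) := by
    rw [step2, step3, step4, step5]
    have : ((n + 1 : ℕ) : ℂ) = (n : ℂ) + 1 := by push_cast; ring
    rw [this]
    field_simp
  exact final
end

section
/- Let n be a positive integer, k a non-negative integer, and b ∈ Z/nZ. The number N_n^{>0}(k,b) of solutions ⟨x_1, ..., x_k⟩ ∈ (Z/nZ)^k of the linear congruence x_1 + ... + x_k ≡ b (mod n) with all x_i nonzero and pairwise distinct modulo n satisfies N_n^{>0}(k,b) = ((−1)^k · k!/n) · ∑_{d | n} (−1)^{⌊k/d⌋} · c_d(b) · binom(n/d − 1, ⌊k/d⌋). -/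
open Finset

namespace RamanujanCount

open Polynomial

/-! ### Counting injective tuples with a given image -/

lemma card_inj_image {α : Type*} [DecidableEq α] [Fintype α] (k : ℕ) (t : Finset α)
    (ht : t.card = k) :
    ((univ : Finset (Fin k → α)).filter
        (fun x => Function.Injective x ∧ Finset.image x univ = t)).card = k.factorial := by
  classical
  have hcard_emb : (univ : Finset (Fin k ↪ {a // a ∈ t})).card = k.factorial := by
    rw [Finset.card_univ, Fintype.card_embedding_eq, Fintype.card_coe, ht, Fintype.card_fin,
      Nat.descFactorial_self]
  rw [← hcard_emb]
  refine Finset.card_bij' (fun x hx => ⟨fun i => ⟨x i, ?_⟩, ?_⟩)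
      (fun e _ => fun i => (e i : α)) (fun x hx => mem_univ _) ?_ ?_ ?_
  · have h := (mem_filter.1 hx).2
    rw [← h.2]
    exact mem_image_of_mem x (mem_univ i)
  · intro i j hij
    have h := (mem_filter.1 hx).2
    exact h.1 (congrArg Subtype.val hij)
  · intro e _
    rw [mem_filter]
    have hinj : Function.Injective (fun i => ((e i : α))) :=
      fun i j hij => e.injective (Subtype.ext hij)
    refine ⟨mem_univ _, hinj, ?_⟩
    have hsub : Finset.image (fun i => (e i : α)) univ ⊆ t := by
      intro a ha
      obtain ⟨i, _, rfl⟩ := Finset.mem_image.1 ha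
      exact (e i).2
    refine Finset.eq_of_subset_of_card_le hsub ?_
    rw [Finset.card_image_of_injective _ hinj, Finset.card_univ, Fintype.card_fin, ht]
  · intro x hx
    rfl
  · intro e he
    ext i
    rfl

lemma sum_inj_eq_esymm {α β : Type*} [DecidableEq α] [Fintype α] [CommRing β]
    (k : ℕ) (s : Finset α) (f : α → β) :
    ∑ x ∈ (univ : Finset (Fin k → α)).filter
        (fun x => Function.Injective x ∧ ∀ i, x i ∈ s), (∏ i, f (x i))
      = (k.factorial : β) * ∑ t ∈ s.powersetCard k, ∏ a ∈ t, f a := by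
  classical
  have hmaps : ∀ x ∈ (univ : Finset (Fin k → α)).filter
      (fun x => Function.Injective x ∧ ∀ i, x i ∈ s),
      Finset.image x univ ∈ s.powersetCard k := by
    intro x hx
    obtain ⟨hinj, hmem⟩ := (mem_filter.1 hx).2
    rw [Finset.mem_powersetCard]
    constructor
    · intro a ha; obtain ⟨i, _, rfl⟩ := Finset.mem_image.1 ha; exact hmem i
    · rw [Finset.card_image_of_injective _ hinj, Finset.card_univ, Fintype.card_fin]
  rw [← Finset.sum_fiberwise_of_maps_to hmaps (fun x => ∏ i, f (x i))]
  rw [Finset.mul_sum]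
  refine Finset.sum_congr rfl (fun t htmem => ?_)
  have htcard : t.card = k := (Finset.mem_powersetCard.1 htmem).2
  have hinner : ∀ x ∈ ((univ : Finset (Fin k → α)).filter
      (fun x => Function.Injective x ∧ ∀ i, x i ∈ s)).filter
      (fun x => Finset.image x univ = t), (∏ i, f (x i)) = ∏ a ∈ t, f a := by
    intro x hx
    obtain ⟨hx1, hx2⟩ := mem_filter.1 hx
    obtain ⟨hinj, _⟩ := (mem_filter.1 hx1).2
    rw [← hx2, Finset.prod_image (fun i _ j _ h => hinj h)]
  rw [Finset.sum_congr rfl hinner, Finset.sum_const]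
  have hfib : (((univ : Finset (Fin k → α)).filter
      (fun x => Function.Injective x ∧ ∀ i, x i ∈ s)).filter
      (fun x => Finset.image x univ = t)).card = k.factorial := by
    rw [Finset.filter_filter, ← card_inj_image k t htcard]
    congr 1
    apply Finset.filter_congr
    intro x _
    constructor
    · rintro ⟨⟨h1, h2⟩, h3⟩; exact ⟨h1, h3⟩
    · rintro ⟨h1, h3⟩
      refine ⟨⟨h1, fun i => ?_⟩, h3⟩
      have hmi : x i ∈ Finset.image x univ := mem_image_of_mem x (mem_univ i)
      rw [h3] at hmi
      exact (Finset.mem_powersetCard.1 htmem).1 hmi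
  rw [hfib, nsmul_eq_mul]

/-! ### The standard additive character of `ZMod n` -/

noncomputable def zet (n : ℕ) : ℂ := Complex.exp (2 * Real.pi * Complex.I / n)

noncomputable def psi (n : ℕ) (c : ZMod n) : ℂ := zet n ^ c.val

variable {n : ℕ}

lemma psi_def (c : ZMod n) : psi n c = zet n ^ c.val := rfl

lemma zet_prim (hn : n ≠ 0) : IsPrimitiveRoot (zet n) n :=
  Complex.isPrimitiveRoot_exp n hn

lemma psi_natCast [NeZero n] (x : ℕ) : psi n (x : ZMod n) = zet n ^ x := by
  have hn : n ≠ 0 := NeZero.ne n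
  rw [psi_def, ZMod.val_natCast]
  conv_rhs => rw [← Nat.div_add_mod x n]
  rw [pow_add, pow_mul, (zet_prim hn).pow_eq_one, one_pow, one_mul]

lemma psi_zero [NeZero n] : psi n 0 = 1 := by
  rw [psi_def, ZMod.val_zero, pow_zero]

lemma psi_add [NeZero n] (a b : ZMod n) : psi n (a + b) = psi n a * psi n b := by
  have h : a + b = ((a.val + b.val : ℕ) : ZMod n) := by
    rw [Nat.cast_add, ZMod.natCast_rightInverse a, ZMod.natCast_rightInverse b]
  rw [h, psi_natCast, pow_add, psi_def, psi_def]

lemma psi_sum [NeZero n] {ι : Type*} (s : Finset ι) (f : ι → ZMod n) :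
    psi n (∑ i ∈ s, f i) = ∏ i ∈ s, psi n (f i) := by
  classical
  induction s using Finset.cons_induction with
  | empty => simp [psi_zero]
  | cons a s ha ih => rw [Finset.sum_cons, Finset.prod_cons, psi_add, ih]

lemma psi_mul [NeZero n] (m a : ZMod n) : psi n (m * a) = psi n m ^ a.val := by
  have h : m * a = ((m.val * a.val : ℕ) : ZMod n) := by
    rw [Nat.cast_mul, ZMod.natCast_rightInverse m, ZMod.natCast_rightInverse a]
  rw [h, psi_natCast, pow_mul, psi_def]

lemma psi_pow_n [NeZero n] (m : ZMod n) : psi n m ^ n = 1 := by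
  rw [psi_def, ← pow_mul, mul_comm, pow_mul, (zet_prim (NeZero.ne n)).pow_eq_one, one_pow]

lemma psi_neg [NeZero n] (m : ZMod n) : psi n (-m) = (psi n m)⁻¹ := by
  have h : psi n (-m) * psi n m = 1 := by
    rw [← psi_add, neg_add_cancel, psi_zero]
  exact eq_inv_of_mul_eq_one_left h

lemma orderOf_psi_neg [NeZero n] (m : ZMod n) :
    orderOf (psi n (-m)) = orderOf (psi n m) := by
  refine orderOf_eq_orderOf_iff.2 (fun N => ?_)
  have key : psi n (-m) ^ N * psi n m ^ N = 1 := by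
    rw [← mul_pow, ← psi_add, neg_add_cancel, psi_zero, one_pow]
  constructor
  · intro h; rw [h, one_mul] at key; exact key
  · intro h; rw [h, mul_one] at key; exact key

lemma orderOf_psi_dvd [NeZero n] (m : ZMod n) : orderOf (psi n m) ∣ n :=
  orderOf_dvd_of_pow_eq_one (psi_pow_n m)

lemma orderOf_psi_pos [NeZero n] (m : ZMod n) : 0 < orderOf (psi n m) := by
  exact (isOfFinOrder_iff_pow_eq_one.2 ⟨n, Nat.pos_of_ne_zero (NeZero.ne n), psi_pow_n m⟩).orderOf_pos

lemma orderOf_zet_pow (hn : n ≠ 0) (x : ℕ) (hx : x ≠ 0) :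
    orderOf (zet n ^ x) = n / Nat.gcd n x := by
  rw [orderOf_pow' _ hx, ← (zet_prim hn).eq_orderOf]

lemma prod_zmod [NeZero n] {M : Type*} [CommMonoid M] (f : ℕ → M) :
    ∏ a : ZMod n, f a.val = ∏ i ∈ range n, f i := by
  refine Finset.prod_nbij' (fun a => a.val) (fun i => (i : ZMod n)) ?_ ?_ ?_ ?_ ?_
  · intro a _; exact mem_range.2 (ZMod.val_lt a)
  · intro i _; exact mem_univ _
  · intro a _; exact ZMod.natCast_rightInverse a
  · intro i hi; exact ZMod.val_cast_of_lt (mem_range.1 hi)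
  · intro a _; rfl

lemma sum_zmod [NeZero n] {M : Type*} [AddCommMonoid M] (f : ℕ → M) :
    ∑ a : ZMod n, f a.val = ∑ i ∈ range n, f i := by
  refine Finset.sum_nbij' (fun a => a.val) (fun i => (i : ZMod n)) ?_ ?_ ?_ ?_ ?_
  · intro a _; exact mem_range.2 (ZMod.val_lt a)
  · intro i _; exact mem_univ _
  · intro a _; exact ZMod.natCast_rightInverse a
  · intro i hi; exact ZMod.val_cast_of_lt (mem_range.1 hi)
  · intro a _; rfl

lemma orth [NeZero n] (c : ZMod n) :
    ∑ m : ZMod n, psi n (m * c) = if c = 0 then (n : ℂ) else 0 := by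
  have h1 : ∀ m : ZMod n, psi n (m * c) = psi n c ^ m.val := by
    intro m; rw [mul_comm, psi_mul]
  simp only [h1]
  rw [sum_zmod (fun i => psi n c ^ i)]
  by_cases hc : c = 0
  · simp [hc, psi_zero]
  · rw [if_neg hc]
    have hw1 : psi n c ≠ 1 := by
      intro h
      apply hc
      have := (zet_prim (NeZero.ne n)).pow_eq_one_iff_dvd c.val
      rw [psi_def] at h
      have hdvd : n ∣ c.val := this.1 h
      exact (ZMod.val_eq_zero c).1 (Nat.eq_zero_of_dvd_of_lt hdvd (ZMod.val_lt c))
    have hgeom := geom_sum_mul (psi n c) n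
    rw [psi_pow_n, sub_self] at hgeom
    rcases mul_eq_zero.1 hgeom with h | h
    · exact h
    · exact absurd (sub_eq_zero.1 h) hw1

/-! ### The key polynomial identity -/

lemma prod_range_pow_periodic {M : Type*} [CommMonoid M] (f : ℕ → M) (d : ℕ)
    (hf : ∀ i, f (i + d) = f i) (g : ℕ) :
    ∏ i ∈ range (g * d), f i = (∏ i ∈ range d, f i) ^ g := by
  have hshift : ∀ q i, f (i + q * d) = f i := by
    intro q
    induction q with
    | zero => simp
    | succ q ih =>
      intro i
      have : i + (q + 1) * d = (i + q * d) + d := by ring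
      rw [this, hf, ih]
  induction g with
  | zero => simp
  | succ g ih =>
    have : (g + 1) * d = g * d + d := by ring
    rw [this, Finset.prod_range_add, ih, pow_succ]
    congr 1
    refine Finset.prod_congr rfl (fun i _ => ?_)
    rw [add_comm (g * d) i, hshift]

lemma prod_range_prim (w : ℂ) (d : ℕ) (hd : 0 < d) (hw : IsPrimitiveRoot w d) :
    ∏ i ∈ range d, (X - C (w ^ i)) = X ^ d - 1 := by
  haveI : NeZero d := ⟨hd.ne'⟩
  rw [X_pow_sub_one_eq_prod hd hw]
  refine Finset.prod_bij (fun i _ => w ^ i) ?_ ?_ ?_ ?_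
  · intro i _
    refine (Polynomial.mem_nthRootsFinset hd (1 : ℂ)).2 ?_
    rw [← pow_mul, mul_comm, pow_mul, hw.pow_eq_one, one_pow]
  · intro i hi j hj hij
    exact hw.pow_inj (mem_range.1 hi) (mem_range.1 hj) hij
  · intro ξ hξ
    obtain ⟨i, hik, hi⟩ := hw.eq_pow_of_pow_eq_one ((Polynomial.mem_nthRootsFinset hd (1 : ℂ)).1 hξ)
    exact ⟨i, mem_range.2 hik, hi⟩
  · intro i _; rfl

lemma claimB [NeZero n] (m : ZMod n) :
    ∏ a ∈ (univ.erase (0 : ZMod n)), (X - C (psi n (m * a)))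
      = (X ^ (orderOf (psi n m)) - 1) ^ (n / orderOf (psi n m) - 1)
        * ∑ i ∈ range (orderOf (psi n m)), (X : ℂ[X]) ^ i := by
  classical
  set w := psi n m with hw_def
  set d := orderOf w with hd_def
  set g := n / d with hg_def
  have hd0 : 0 < d := orderOf_psi_pos m
  have hdvd : d ∣ n := orderOf_psi_dvd m
  have hgd : g * d = n := Nat.div_mul_cancel hdvd
  have hg0 : 0 < g := by
    rcases Nat.eq_zero_or_pos g with h | h
    · exfalso; rw [h, zero_mul] at hgd; exact (NeZero.ne n) hgd.symm
    · exact h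
  have hprim : IsPrimitiveRoot w d := IsPrimitiveRoot.orderOf w
  have htotal : ∏ a : ZMod n, (X - C (psi n (m * a))) = ((X : ℂ[X]) ^ d - 1) ^ g := by
    have h1 : ∀ a : ZMod n, (X - C (psi n (m * a))) = (fun i => X - C (w ^ i)) a.val := by
      intro a; rw [psi_mul]
    calc ∏ a : ZMod n, (X - C (psi n (m * a)))
        = ∏ a : ZMod n, (fun i => (X : ℂ[X]) - C (w ^ i)) a.val :=
          Finset.prod_congr rfl (fun a _ => h1 a)
      _ = ∏ i ∈ range n, (X - C (w ^ i)) := prod_zmod (fun i => (X : ℂ[X]) - C (w ^ i))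
      _ = ∏ i ∈ range (g * d), (X - C (w ^ i)) := by rw [hgd]
      _ = (∏ i ∈ range d, (X - C (w ^ i))) ^ g := by
          refine prod_range_pow_periodic _ _ (fun i => ?_) g
          rw [pow_add, pow_orderOf_eq_one, mul_one]
      _ = ((X : ℂ[X]) ^ d - 1) ^ g := by rw [prod_range_prim w d hd0 hprim]
  have hsplit : ∏ a : ZMod n, (X - C (psi n (m * a)))
      = (X - 1) * ∏ a ∈ (univ.erase (0 : ZMod n)), (X - C (psi n (m * a))) := by
    rw [← Finset.mul_prod_erase univ _ (mem_univ (0 : ZMod n))]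
    congr 1
    rw [mul_zero, psi_zero, map_one]
  have hX1 : (X - 1 : ℂ[X]) ≠ 0 := by
    have := Polynomial.X_sub_C_ne_zero (1 : ℂ)
    rwa [map_one] at this
  apply mul_left_cancel₀ hX1
  rw [← hsplit, htotal]
  have : ((X : ℂ[X]) ^ d - 1) ^ g = ((X : ℂ[X]) ^ d - 1) ^ (g - 1) * ((X : ℂ[X]) ^ d - 1) := by
    rw [← pow_succ, Nat.sub_add_cancel hg0]
  rw [this, ← geom_sum_mul (X : ℂ[X]) d]
  ring

lemma coeffP (d g t : ℕ) (hd : 0 < d) (hg : 0 < g) (ht : t < d * g) :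
    (((X : ℂ[X]) ^ d - 1) ^ (g - 1) * ∑ i ∈ range d, (X : ℂ[X]) ^ i).coeff t
      = (-1) ^ (g - 1 - t / d) * ((g - 1).choose (t / d) : ℂ) := by
  classical
  set s : ℂ[X] := ∑ i ∈ range d, (X : ℂ[X]) ^ i with hs_def
  have hscoeff : ∀ r, s.coeff r = if r < d then (1 : ℂ) else 0 := by
    intro r
    rw [hs_def, Polynomial.finset_sum_coeff]
    have : ∀ i ∈ range d, ((X : ℂ[X]) ^ i).coeff r = if r = i then (1 : ℂ) else 0 := by
      intro i _; rw [Polynomial.coeff_X_pow]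
    rw [Finset.sum_congr rfl this, Finset.sum_ite_eq]
    simp [mem_range]
  have hexp : (((X : ℂ[X]) ^ d - 1) ^ (g - 1) * s)
      = ∑ j ∈ range g, C ((-1 : ℂ) ^ (g - 1 - j) * ((g - 1).choose j : ℂ)) * (X ^ (d * j) * s) := by
    rw [sub_eq_add_neg, add_pow]
    rw [show g - 1 + 1 = g from Nat.sub_add_cancel hg]
    rw [Finset.sum_mul]
    refine Finset.sum_congr rfl (fun j hj => ?_)
    have h1 : ((-1 : ℂ[X]) ^ (g - 1 - j)) = C ((-1 : ℂ) ^ (g - 1 - j)) := by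
      rw [map_pow, map_neg, map_one]
    have h2 : (((g - 1).choose j : ℕ) : ℂ[X]) = C (((g - 1).choose j : ℕ) : ℂ) := by
      exact (Polynomial.C_eq_natCast _).symm
    rw [h1, h2, ← pow_mul, map_mul]
    ring
  rw [hexp, Polynomial.finset_sum_coeff]
  have hterm : ∀ j, (C ((-1 : ℂ) ^ (g - 1 - j) * ((g - 1).choose j : ℂ)) * (X ^ (d * j) * s)).coeff t
      = ((-1 : ℂ) ^ (g - 1 - j) * ((g - 1).choose j : ℂ))
          * (if d * j ≤ t ∧ t - d * j < d then 1 else 0) := by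
    intro j
    rw [Polynomial.coeff_C_mul]
    congr 1
    rw [mul_comm ((X : ℂ[X]) ^ (d * j)) s, Polynomial.coeff_mul_X_pow']
    by_cases h1 : d * j ≤ t
    · rw [if_pos h1, hscoeff]
      by_cases h2 : t - d * j < d
      · rw [if_pos h2, if_pos ⟨h1, h2⟩]
      · rw [if_neg h2, if_neg (fun h => h2 h.2)]
    · rw [if_neg h1, if_neg (fun h => h1 h.1)]
  rw [Finset.sum_congr rfl (fun j _ => hterm j)]
  have htd : t / d < g := (Nat.div_lt_iff_lt_mul hd).2 (by rwa [mul_comm] at ht)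
  rw [Finset.sum_eq_single (t / d)]
  · have hc1 : d * (t / d) ≤ t := by
      rw [mul_comm]; exact Nat.div_mul_le_self t d
    have hc2 : t - d * (t / d) < d := by
      have h1 := Nat.div_add_mod t d
      have h2 := Nat.mod_lt t hd
      omega
    rw [if_pos ⟨hc1, hc2⟩, mul_one]
  · intro j hj hne
    have : ¬ (d * j ≤ t ∧ t - d * j < d) := by
      rintro ⟨h1, h2⟩
      apply hne
      have : t / d = j := by
        refine Nat.div_eq_of_lt_le ?_ ?_
        · rwa [mul_comm]
        · have hj1 : (j + 1) * d = d * j + d := by ring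
          omega
      omega
    rw [if_neg this, mul_zero]
  · intro habs
    exact absurd (mem_range.2 htd) habs

lemma claimC [NeZero n] (m : ZMod n) (k : ℕ) :
    ((univ.erase (0 : ZMod n)).val.map (fun a => psi n (m * a))).esymm k
      = (-1) ^ (k + k / orderOf (psi n m))
          * ((n / orderOf (psi n m) - 1).choose (k / orderOf (psi n m)) : ℂ) := by
  classical
  set d := orderOf (psi n m) with hd_def
  set g := n / d with hg_def
  have hd0 : 0 < d := orderOf_psi_pos m
  have hdvd : d ∣ n := orderOf_psi_dvd m
  have hgd : g * d = n := Nat.div_mul_cancel hdvd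
  have hn0 : 0 < n := Nat.pos_of_ne_zero (NeZero.ne n)
  have hg0 : 0 < g := by
    rcases Nat.eq_zero_or_pos g with h | h
    · exfalso; rw [h, zero_mul] at hgd; omega
    · exact h
  set M := ((univ.erase (0 : ZMod n)).val.map (fun a => psi n (m * a))) with hM
  have hcard : Multiset.card M = n - 1 := by
    rw [hM, Multiset.card_map]
    have : ((univ.erase (0 : ZMod n)).val.card) = (univ.erase (0 : ZMod n)).card := rfl
    rw [this, Finset.card_erase_of_mem (mem_univ _), Finset.card_univ, ZMod.card]
  set q := k / d with hq_def
  by_cases hk : k ≤ n - 1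
  · set t := n - 1 - k with ht_def
    have htle : t ≤ Multiset.card M := by rw [hcard]; omega
    have hcoeff := Multiset.prod_X_sub_C_coeff M htle
    have hsub : Multiset.card M - t = k := by rw [hcard]; omega
    rw [hsub] at hcoeff
    have hprod : (M.map (fun z => X - C z)).prod
        = ∏ a ∈ (univ.erase (0 : ZMod n)), (X - C (psi n (m * a))) := by
      rw [hM, Multiset.map_map, Finset.prod_eq_multiset_prod]
      rfl
    rw [hprod, claimB m, ← hd_def, ← hg_def] at hcoeff
    have htlt : t < d * g := by rw [mul_comm, hgd]; omega
    rw [coeffP d g t hd0 hg0 htlt] at hcoeff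
    set r := k % d with hr_def
    have hdm : d * q + r = k := Nat.div_add_mod k d
    have hrd : r < d := Nat.mod_lt k hd0
    have hqg : q < g := by
      refine (Nat.div_lt_iff_lt_mul hd0).2 ?_
      omega
    obtain ⟨A, hA⟩ : ∃ A, g = q + 1 + A := ⟨g - 1 - q, by omega⟩
    obtain ⟨B, hB⟩ : ∃ B, d = r + 1 + B := ⟨d - 1 - r, by omega⟩
    have hn2 : n = d * q + d + d * A := by rw [← hgd, hA]; ring
    clear_value t q r
    have hteq : t = d * A + B := by omega
    have htdiv : t / d = A := by
      rw [hteq, Nat.mul_add_div hd0, Nat.div_eq_of_lt (by omega), add_zero]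
    have hAq : g - 1 - A = q := by omega
    have h6 : (g - 1).choose A = (g - 1).choose q := by
      have hA' : A = g - 1 - q := by omega
      rw [hA']; exact Nat.choose_symm (by omega)
    rw [htdiv, hAq, h6] at hcoeff
    set E := ((-1 : ℂ) ^ k) with hE_def
    have hE : E * E = 1 := by
      rw [hE_def, ← pow_add]
      exact Even.neg_one_pow ⟨k, by ring⟩
    have hpow : ((-1 : ℂ)) ^ (k + q) = E * (-1) ^ q := by rw [hE_def, pow_add]
    rw [hpow]
    calc M.esymm k = (E * E) * M.esymm k := by rw [hE, one_mul]
      _ = E * (E * M.esymm k) := by ring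
      _ = E * ((-1) ^ q * ((g - 1).choose q : ℂ)) := by rw [← hcoeff, hE_def]
      _ = E * (-1) ^ q * ((g - 1).choose q : ℂ) := by ring
  · have hcard' : Multiset.card M < k := by rw [hcard]; omega
    have h0 : M.esymm k = 0 := by
      rw [Multiset.esymm, Multiset.powersetCard_eq_empty k hcard']
      simp
    have hqge : g ≤ q := by
      rw [hq_def, hg_def]
      exact Nat.div_le_div_right (by omega)
    have hch : (g - 1).choose q = 0 := Nat.choose_eq_zero_of_lt (by omega)
    rw [h0, hch]
    simp

noncomputable def KK (n k d : ℕ) : ℂ :=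
  (k.factorial : ℂ) * ((-1) ^ (k + k / d) * ((n / d - 1).choose (k / d) : ℂ))

/-! ### Grouping characters by order: Ramanujan sums -/

lemma gcd_eq_of_order [NeZero n] {m : ZMod n} {d : ℕ} (hd : d ∣ n) (h0 : m.val ≠ 0)
    (horder : orderOf (psi n m) = d) : Nat.gcd n m.val = n / d := by
  have hn0 : 0 < n := Nat.pos_of_ne_zero (NeZero.ne n)
  have hd0 : 0 < d := Nat.pos_of_dvd_of_pos hd hn0
  have horder' : n / Nat.gcd n m.val = d := by
    rw [← horder, psi_def, orderOf_zet_pow (NeZero.ne n) m.val h0]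
  have h1 : Nat.gcd n m.val ∣ n := Nat.gcd_dvd_left _ _
  have h2 : Nat.gcd n m.val * d = n := by
    rw [← horder']; exact Nat.mul_div_cancel' h1
  have h3 : n / d * d = n := Nat.div_mul_cancel hd
  exact Nat.eq_of_mul_eq_mul_right hd0 (h2.trans h3.symm)

lemma order_eq_one_of_val_zero [NeZero n] {m : ZMod n} {d : ℕ} (h0 : m.val = 0)
    (horder : orderOf (psi n m) = d) : d = 1 ∧ m = 0 := by
  have hm0 : m = 0 := (ZMod.val_eq_zero m).1 h0
  rw [hm0, psi_zero, orderOf_one] at horder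
  exact ⟨horder.symm, hm0⟩

lemma sum_order [NeZero n] (b : ZMod n) (d : ℕ) (hd : d ∣ n) :
    ∑ m ∈ univ.filter (fun m : ZMod n => orderOf (psi n m) = d), psi n (m * b)
      = ramanujanSum d b.val := by
  classical
  have hn0 : 0 < n := Nat.pos_of_ne_zero (NeZero.ne n)
  have hd0 : 0 < d := Nat.pos_of_dvd_of_pos hd hn0
  have hnd0 : 0 < n / d := Nat.div_pos (Nat.le_of_dvd hn0 hd) hd0
  have hndd : n / d * d = n := Nat.div_mul_cancel hd
  rw [ramanujanSum]
  refine Finset.sum_nbij' (fun m : ZMod n => if m.val = 0 then d else m.val / (n / d))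
      (fun j => ((n / d * j : ℕ) : ZMod n)) ?_ ?_ ?_ ?_ ?_
  · -- forward membership
    intro m hm
    have horder : orderOf (psi n m) = d := (mem_filter.1 hm).2
    by_cases h0 : m.val = 0
    · obtain ⟨hd1, hm0⟩ := order_eq_one_of_val_zero h0 horder
      rw [if_pos h0, hd1]
      simp
    · rw [if_neg h0]
      have hgcd : Nat.gcd n m.val = n / d := gcd_eq_of_order hd h0 horder
      have hdvdval : n / d ∣ m.val := hgcd ▸ Nat.gcd_dvd_right n m.val
      have hjval : n / d * (m.val / (n / d)) = m.val := Nat.mul_div_cancel' hdvdval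
      set j := m.val / (n / d) with hj_def
      have hj1 : 1 ≤ j := by
        rcases Nat.eq_zero_or_pos j with h | h
        · rw [h, mul_zero] at hjval; exact absurd hjval.symm h0
        · exact h
      have hjd : j ≤ d := by
        by_contra hlt
        push_neg at hlt
        have hbig : n / d * d < n / d * j := mul_lt_mul_of_pos_left hlt hnd0
        rw [hndd] at hbig
        rw [hjval] at hbig
        exact absurd (ZMod.val_lt m) (by omega)
      have hcop : Nat.gcd j d = 1 := by
        have hexp : Nat.gcd (n / d * d) (n / d * j) = n / d * Nat.gcd d j :=
          Nat.gcd_mul_left _ _ _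
        rw [hndd] at hexp
        rw [hjval, hgcd] at hexp
        have h3 : n / d * 1 = n / d * Nat.gcd d j := by rw [mul_one]; exact hexp
        have h4 := Nat.eq_of_mul_eq_mul_left hnd0 h3
        rw [Nat.gcd_comm]; omega
      rw [mem_filter, mem_Icc]
      exact ⟨⟨hj1, hjd⟩, hcop⟩
  · -- backward membership
    intro j hj
    rw [mem_filter, mem_Icc] at hj
    obtain ⟨⟨hj1, hjd⟩, hcop⟩ := hj
    rw [mem_filter]
    refine ⟨mem_univ _, ?_⟩
    have hx0 : n / d * j ≠ 0 := Nat.mul_ne_zero hnd0.ne' (by omega)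
    rw [psi_natCast, orderOf_zet_pow (NeZero.ne n) _ hx0]
    have h4 : Nat.gcd (n / d * d) (n / d * j) = n / d * Nat.gcd d j := Nat.gcd_mul_left _ _ _
    rw [hndd] at h4
    rw [h4, Nat.gcd_comm d j, hcop, mul_one]
    exact Nat.div_div_self hd (NeZero.ne n)
  · -- left inverse
    intro m hm
    have horder : orderOf (psi n m) = d := (mem_filter.1 hm).2
    by_cases h0 : m.val = 0
    · obtain ⟨hd1, hm0⟩ := order_eq_one_of_val_zero h0 horder
      rw [if_pos h0, hd1, hm0]
      simp
    · rw [if_neg h0]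
      have hgcd : Nat.gcd n m.val = n / d := gcd_eq_of_order hd h0 horder
      have hdvdval : n / d ∣ m.val := hgcd ▸ Nat.gcd_dvd_right n m.val
      rw [Nat.mul_div_cancel' hdvdval]
      exact ZMod.natCast_rightInverse m
  · -- right inverse
    intro j hj
    rw [mem_filter, mem_Icc] at hj
    obtain ⟨⟨hj1, hjd⟩, hcop⟩ := hj
    rcases eq_or_lt_of_le hjd with rfl | hjlt
    · rw [hndd, ZMod.natCast_self, ZMod.val_zero, if_pos rfl]
    · have hlt : n / d * j < n := by
        have := mul_lt_mul_of_pos_left hjlt hnd0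
        omega
      have hval : ((n / d * j : ℕ) : ZMod n).val = n / d * j := ZMod.val_cast_of_lt hlt
      have hne : n / d * j ≠ 0 := Nat.mul_ne_zero hnd0.ne' (by omega)
      rw [hval, if_neg hne, Nat.mul_div_cancel_left j hnd0]
  · -- values
    intro m hm
    have horder : orderOf (psi n m) = d := (mem_filter.1 hm).2
    by_cases h0 : m.val = 0
    · obtain ⟨hd1, hm0⟩ := order_eq_one_of_val_zero h0 horder
      rw [if_pos h0, hm0, zero_mul, psi_zero, hd1]
      have harg : (2 * ↑Real.pi * Complex.I * ((1 : ℕ) : ℂ) * (b.val : ℂ) / ((1 : ℕ) : ℂ))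
          = (b.val : ℕ) * (2 * ↑Real.pi * Complex.I) := by push_cast; ring
      rw [harg, Complex.exp_nat_mul, Complex.exp_two_pi_mul_I, one_pow]
    · rw [if_neg h0]
      have hgcd : Nat.gcd n m.val = n / d := gcd_eq_of_order hd h0 horder
      have hdvdval : n / d ∣ m.val := hgcd ▸ Nat.gcd_dvd_right n m.val
      have hjval : n / d * (m.val / (n / d)) = m.val := Nat.mul_div_cancel' hdvdval
      set j := m.val / (n / d) with hj_def
      have hmul : m * b = ((m.val * b.val : ℕ) : ZMod n) := by
        rw [Nat.cast_mul, ZMod.natCast_rightInverse m, ZMod.natCast_rightInverse b]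
      rw [hmul, psi_natCast, ← hjval, mul_assoc, pow_mul]
      have hzd : zet n ^ (n / d) = Complex.exp (2 * ↑Real.pi * Complex.I / d) := by
        rw [zet, ← Complex.exp_nat_mul]
        congr 1
        have hcast : ((n / d : ℕ) : ℂ) * (d : ℂ) = (n : ℂ) := by
          rw [← Nat.cast_mul, hndd]
        have hdne : (d : ℂ) ≠ 0 := Nat.cast_ne_zero.2 hd0.ne'
        have hnne : (n : ℂ) ≠ 0 := Nat.cast_ne_zero.2 (NeZero.ne n)
        have hnd : ((n / d : ℕ) : ℂ) = (n : ℂ) / d := by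
          rw [eq_div_iff hdne]; exact hcast
        rw [hnd]
        field_simp
      rw [hzd, ← Complex.exp_nat_mul]
      congr 1
      push_cast
      have hdne : (d : ℂ) ≠ 0 := Nat.cast_ne_zero.2 hd0.ne'
      field_simp

end RamanujanCount

open RamanujanCount

/-- The number `N_n^{>0}(k,b)` of solutions of `x₁ + ⋯ + xₖ ≡ b (mod n)` with all `xᵢ`
nonzero and pairwise distinct modulo `n` is
`((−1)^k·k!/n) · ∑_{d ∣ n} (−1)^{⌊k/d⌋} c_d(b) C(n/d − 1, ⌊k/d⌋)`. -/
theorem count_distinct_nonzero_solutions (n : ℕ) (hn : 0 < n) (k : ℕ) (b : ZMod n) :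
    (Nat.card {x : Fin k → ZMod n //
        (∑ i, x i) = b ∧ Function.Injective x ∧ ∀ i, x i ≠ 0} : ℂ) =
      (-1 : ℂ) ^ k * (Nat.factorial k : ℂ) / (n : ℂ) *
        ∑ d ∈ n.divisors,
          (-1 : ℂ) ^ (k / d) * ramanujanSum d b.val * ((n / d - 1).choose (k / d) : ℂ) := by
  classical
  haveI : NeZero n := ⟨hn.ne'⟩
  set T : Finset (Fin k → ZMod n) :=
    univ.filter (fun x => Function.Injective x ∧ ∀ i, x i ∈ univ.erase (0 : ZMod n)) with hT
  have hcount : (Nat.card {x : Fin k → ZMod n //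
      (∑ i, x i) = b ∧ Function.Injective x ∧ ∀ i, x i ≠ 0} : ℕ)
      = (T.filter (fun x => (∑ i, x i) = b)).card := by
    rw [Nat.card_eq_fintype_card, Fintype.card_subtype]
    congr 1
    rw [hT, Finset.filter_filter]
    apply Finset.filter_congr
    intro x _
    simp only [mem_erase, mem_univ, and_true]
    tauto
  have key : (n : ℂ) * ((T.filter (fun x => (∑ i, x i) = b)).card : ℂ)
      = ∑ m : ZMod n, psi n (m * (-b)) * KK n k (orderOf (psi n m)) := by
    calc (n : ℂ) * ((T.filter (fun x => (∑ i, x i) = b)).card : ℂ)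
        = ∑ _x ∈ T.filter (fun x => (∑ i, x i) = b), (n : ℂ) := by
          rw [Finset.sum_const, nsmul_eq_mul, mul_comm]
      _ = ∑ x ∈ T, (if (∑ i, x i) = b then (n : ℂ) else 0) := Finset.sum_filter _ _
      _ = ∑ x ∈ T, ∑ m : ZMod n, psi n (m * ((∑ i, x i) - b)) := by
          refine Finset.sum_congr rfl (fun x _ => ?_)
          rw [orth]
          simp [sub_eq_zero]
      _ = ∑ m : ZMod n, ∑ x ∈ T, psi n (m * ((∑ i, x i) - b)) := Finset.sum_comm
      _ = ∑ m : ZMod n, psi n (m * (-b)) * KK n k (orderOf (psi n m)) := by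
          refine Finset.sum_congr rfl (fun m _ => ?_)
          have hsplit : ∀ x : Fin k → ZMod n,
              psi n (m * ((∑ i, x i) - b)) = (∏ i, psi n (m * x i)) * psi n (m * (-b)) := by
            intro x
            have harg : m * ((∑ i, x i) - b) = (∑ i, m * x i) + m * (-b) := by
              rw [← Finset.mul_sum]; ring
            rw [harg, psi_add, psi_sum]
          rw [Finset.sum_congr rfl (fun x _ => hsplit x), ← Finset.sum_mul]
          rw [hT, sum_inj_eq_esymm k (univ.erase (0 : ZMod n)) (fun a => psi n (m * a))]
          rw [← Finset.esymm_map_val, claimC m k]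
          rw [KK]
          ring
  have key2 : ∑ m : ZMod n, psi n (m * (-b)) * KK n k (orderOf (psi n m))
      = ∑ m : ZMod n, psi n (m * b) * KK n k (orderOf (psi n m)) := by
    refine Finset.sum_nbij' (fun m => -m) (fun m => -m) (fun _ _ => mem_univ _)
      (fun _ _ => mem_univ _) (fun m _ => neg_neg m) (fun m _ => neg_neg m) ?_
    intro m _
    rw [show (-m) * b = m * (-b) by ring, orderOf_psi_neg]
  have key3 : ∑ m : ZMod n, psi n (m * b) * KK n k (orderOf (psi n m))
      = ∑ d ∈ n.divisors, KK n k d * ramanujanSum d b.val := by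
    have hmaps : ∀ m ∈ (univ : Finset (ZMod n)), orderOf (psi n m) ∈ n.divisors := by
      intro m _
      rw [Nat.mem_divisors]
      exact ⟨orderOf_psi_dvd m, hn.ne'⟩
    rw [← Finset.sum_fiberwise_of_maps_to hmaps
      (fun m => psi n (m * b) * KK n k (orderOf (psi n m)))]
    refine Finset.sum_congr rfl (fun d hd => ?_)
    have hstep : ∀ m ∈ univ.filter (fun m : ZMod n => orderOf (psi n m) = d),
        psi n (m * b) * KK n k (orderOf (psi n m)) = psi n (m * b) * KK n k d := by
      intro m hm
      rw [(mem_filter.1 hm).2]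
    rw [Finset.sum_congr rfl hstep, ← Finset.sum_mul,
      sum_order b d (Nat.mem_divisors.1 hd).1, mul_comm]
  have hne : (n : ℂ) ≠ 0 := Nat.cast_ne_zero.2 hn.ne'
  rw [hcount]
  apply mul_left_cancel₀ hne
  rw [key, key2, key3]
  rw [show (n : ℂ) * ((-1 : ℂ) ^ k * (Nat.factorial k : ℂ) / (n : ℂ) *
      ∑ d ∈ n.divisors, (-1 : ℂ) ^ (k / d) * ramanujanSum d b.val
        * ((n / d - 1).choose (k / d) : ℂ))
    = (-1 : ℂ) ^ k * (Nat.factorial k : ℂ) *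
      ∑ d ∈ n.divisors, (-1 : ℂ) ^ (k / d) * ramanujanSum d b.val
        * ((n / d - 1).choose (k / d) : ℂ) from by field_simp]
  rw [Finset.mul_sum]
  refine Finset.sum_congr rfl (fun d _ => ?_)
  rw [KK, pow_add]
  ring
end

section
/- Let n be a positive integer, 0 ≤ b ≤ n an integer, and k a non-negative integer. The number of codewords in the Varshamov–Tenengolts code VT_b(n) with Hamming weight k (i.e., with exactly k coordinates equal to 1) equals ((−1)^k/(n+1)) · ∑_{d | n+1} (−1)^{⌊k/d⌋} · c_d(b) · binom((n+1)/d − 1, ⌊k/d⌋). -/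
open Finset

open Polynomial

lemma neg_one_pow_congr' {a b : ℕ} (h : a % 2 = b % 2) : (-1 : ℂ) ^ a = (-1) ^ b := by
  conv_lhs => rw [← Nat.div_add_mod a 2]
  conv_rhs => rw [← Nat.div_add_mod b 2]
  rw [pow_add, pow_add, pow_mul, pow_mul, neg_one_sq, one_pow, one_pow, h]

lemma alt_partial_sum (M T : ℕ) :
    ∑ r ∈ range (T + 1), (-1 : ℂ) ^ r * ((M + 1).choose r : ℂ) =
      (-1 : ℂ) ^ T * (M.choose T : ℂ) := by
  induction T with
  | zero => simp
  | succ T ih =>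
    rw [Finset.sum_range_succ, ih, Nat.choose_succ_succ (M) (T)]
    push_cast
    ring

lemma prod_X_add_C_pow_rou {d : ℕ} (hd : 0 < d) {ζ : ℂ} (hζ : IsPrimitiveRoot ζ d) (M : ℕ) :
    ∏ i ∈ range (d * M), (X + C (ζ ^ i)) = ((X : ℂ[X]) ^ d - C ((-1) ^ d)) ^ M := by
  have hbase : ((X : ℂ[X]) ^ d - C ((-1) ^ d)) = ∏ i ∈ range d, (X + C (ζ ^ i)) := by
    have := X_pow_sub_C_eq_prod hζ hd (α := (-1 : ℂ)) rfl
    rw [this]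
    refine Finset.prod_congr rfl fun i _ => ?_
    rw [mul_neg_one, map_neg, sub_neg_eq_add]
  induction M with
  | zero => simp
  | succ M ih =>
    rw [Nat.mul_succ, Finset.prod_range_add, ih, pow_succ]
    congr 1
    rw [hbase]
    refine Finset.prod_congr rfl fun i _ => ?_
    rw [pow_add, pow_mul, hζ.pow_eq_one, one_pow, one_mul]

lemma coeff_pow_formula {d : ℕ} (hd : 0 < d) (M s : ℕ) :
    ((((X : ℂ[X]) ^ d - C ((-1) ^ d)) ^ M).coeff s) =
      if d ∣ s then (-1 : ℂ) ^ ((d + 1) * (M - s / d)) * (M.choose (s / d) : ℂ) else 0 := by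
  have hc : ((X : ℂ[X]) ^ d - C ((-1) ^ d)) = X ^ d + C ((-1) ^ (d+1)) := by
    rw [pow_succ, mul_neg_one, map_neg, sub_eq_add_neg]
  rw [hc, add_pow]
  rw [Polynomial.finset_sum_coeff]
  have hterm : ∀ r ∈ range (M + 1),
      ((X : ℂ[X]) ^ d) ^ r * C ((-1 : ℂ) ^ (d+1)) ^ (M - r) * (M.choose r : ℂ[X]) =
        C ((-1 : ℂ) ^ ((d+1) * (M - r)) * (M.choose r : ℂ)) * X ^ (d * r) := by
    intro r _
    rw [← pow_mul, ← map_pow, ← pow_mul, ← Polynomial.C_eq_natCast, C_mul]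
    ring
  rw [Finset.sum_congr rfl fun r hr => by rw [hterm r hr, Polynomial.coeff_C_mul,
    Polynomial.coeff_X_pow]]
  by_cases hdvd : d ∣ s
  · obtain ⟨u, hu⟩ := hdvd
    have hud : s / d = u := by rw [hu, Nat.mul_div_cancel_left _ hd]
    have hcond : ∀ r : ℕ, (s = d * r) ↔ (u = r) := by
      intro r
      constructor
      · intro h; exact Nat.eq_of_mul_eq_mul_left hd (hu ▸ h)
      · intro h; rw [← h, ← hu]
    simp only [hcond, mul_ite, mul_one, mul_zero]
    rw [Finset.sum_ite_eq (range (M+1)) u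
      (fun r => (-1 : ℂ) ^ ((d+1) * (M - r)) * (M.choose r : ℂ))]
    rw [if_pos (show d ∣ s from ⟨u, hu⟩), hud]
    by_cases hu2 : u ∈ range (M + 1)
    · rw [if_pos hu2]
    · rw [if_neg hu2]
      have : M < u := by simpa [Nat.lt_succ_iff, not_le] using hu2
      rw [Nat.choose_eq_zero_of_lt this]
      simp
  · rw [if_neg hdvd]
    refine Finset.sum_eq_zero fun r _ => ?_
    rw [if_neg (fun h => hdvd ⟨r, h⟩)]
    simp

lemma coeff_of_X_add_one_mul (Q : ℂ[X]) (t : ℕ) :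
    Q.coeff t = ∑ s ∈ range (t + 1), (-1 : ℂ) ^ (t - s) * ((X + 1) * Q).coeff s := by
  have hR : ∀ s : ℕ, ((X + 1) * Q).coeff (s + 1) = Q.coeff s + Q.coeff (s + 1) := by
    intro s
    rw [add_mul, one_mul, Polynomial.coeff_add, Polynomial.coeff_X_mul]
  have h0 : ((X + 1) * Q).coeff 0 = Q.coeff 0 := by
    rw [Polynomial.mul_coeff_zero, Polynomial.coeff_add, Polynomial.coeff_X_zero,
      Polynomial.coeff_one_zero, zero_add, one_mul]
  induction t with
  | zero => simp [h0]
  | succ t ih =>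
    rw [Finset.sum_range_succ]
    have hstep : ∀ s ∈ range (t + 1), (-1 : ℂ) ^ (t + 1 - s) * ((X + 1) * Q).coeff s =
        (-1) * ((-1 : ℂ) ^ (t - s) * ((X + 1) * Q).coeff s) := by
      intro s hs
      have hst : s ≤ t := Nat.lt_succ_iff.mp (Finset.mem_range.mp hs)
      have : t + 1 - s = (t - s) + 1 := by omega
      rw [this, pow_succ]
      ring
    rw [Finset.sum_congr rfl hstep, ← Finset.mul_sum, ← ih, hR t]
    simp

lemma esymm_rou {n k d : ℕ} (hk : k ≤ n) {ζ : ℂ} (hζ : IsPrimitiveRoot ζ d)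
    (hd : d ∣ n + 1) :
    ∑ A ∈ powersetCard k (univ : Finset (Fin n)), ∏ i ∈ A, ζ ^ ((i : ℕ) + 1) =
      (-1 : ℂ) ^ (k + k / d) * (((n + 1) / d - 1).choose (k / d) : ℂ) := by
  have hd0 : 0 < d := Nat.pos_of_dvd_of_pos hd (Nat.succ_pos n)
  obtain ⟨M, hM⟩ := hd
  have hMval : (n + 1) / d = M := by rw [hM, Nat.mul_div_cancel_left _ hd0]
  have hM0 : 0 < M := by
    rcases Nat.eq_zero_or_pos M with h | h
    · subst h; omega
    · exact h
  rw [hMval]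
  set Q : ℂ[X] := ∏ i : Fin n, (X + C (ζ ^ ((i : ℕ) + 1))) with hQdef
  have h1 : ∑ A ∈ powersetCard k (univ : Finset (Fin n)), ∏ i ∈ A, ζ ^ ((i : ℕ) + 1) =
      Q.coeff (n - k) := by
    rw [hQdef, Finset.prod_X_add_C_coeff (univ : Finset (Fin n))
      (fun i : Fin n => ζ ^ ((i : ℕ) + 1)) (by simp [hk] : n - k ≤ #(univ : Finset (Fin n)))]
    congr 1
    rw [show #(univ : Finset (Fin n)) = n by simp]
    congr 1
    omega
  have h2 : (X + 1) * Q = ((X : ℂ[X]) ^ d - C ((-1) ^ d)) ^ M := by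
    rw [← prod_X_add_C_pow_rou hd0 hζ M, ← hM]
    rw [Finset.prod_range_succ' (fun i => (X : ℂ[X]) + C (ζ ^ i)) n]
    have hz : (X : ℂ[X]) + C (ζ ^ 0) = X + 1 := by rw [pow_zero, map_one]
    rw [hz, mul_comm]
    congr 1
    rw [hQdef]
    exact Fin.prod_univ_eq_prod_range (fun i => (X : ℂ[X]) + C (ζ ^ (i + 1))) n
  rw [h1, coeff_of_X_add_one_mul Q (n - k), h2]
  have h3 : ∀ s, ((((X : ℂ[X]) ^ d - C ((-1) ^ d)) ^ M).coeff s) =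
      if d ∣ s then (-1 : ℂ) ^ ((d + 1) * (M - s / d)) * (M.choose (s / d) : ℂ) else 0 :=
    coeff_pow_formula hd0 M
  simp only [h3, mul_ite, mul_zero]
  rw [← Finset.sum_filter]
  set T : ℕ := (n - k) / d with hTdef
  have himg : (range (n - k + 1)).filter (fun s => d ∣ s) =
      (range (T + 1)).image (fun r => d * r) := by
    ext s
    simp only [Finset.mem_filter, Finset.mem_range, Finset.mem_image]
    constructor
    · rintro ⟨hs, u, rfl⟩
      refine ⟨u, ?_, rfl⟩
      rw [Nat.lt_succ_iff, hTdef, Nat.le_div_iff_mul_le hd0, mul_comm]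
      omega
    · rintro ⟨u, hu, rfl⟩
      rw [Nat.lt_succ_iff, hTdef, Nat.le_div_iff_mul_le hd0, mul_comm] at hu
      exact ⟨by omega, u, rfl⟩
  rw [himg, Finset.sum_image (fun a _ b _ h => Nat.eq_of_mul_eq_mul_left hd0 h)]
  have h5 : ∀ r ∈ range (T + 1),
      (-1 : ℂ) ^ (n - k - d * r) * ((-1 : ℂ) ^ ((d + 1) * (M - (d * r) / d)) *
        (M.choose ((d * r) / d) : ℂ)) =
      (-1 : ℂ) ^ (k + M + 1) * ((-1 : ℂ) ^ r * (M.choose r : ℂ)) := by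
    intro r hr
    rw [Nat.mul_div_cancel_left _ hd0]
    have hdr : d * r ≤ n - k := by
      rw [Finset.mem_range, Nat.lt_succ_iff, hTdef, Nat.le_div_iff_mul_le hd0, mul_comm] at hr
      exact hr
    have hrM : r < M := Nat.lt_of_mul_lt_mul_left (a := d) (by omega)
    have e0 : (d + 1) * (M - r) + (d + 1) * r = (d + 1) * M := by
      rw [← mul_add, Nat.sub_add_cancel hrM.le]
    have ea : (d + 1) * r = d * r + r := by ring
    have eb : (d + 1) * M = d * M + M := by ring
    rw [← mul_assoc, ← pow_add]
    rw [neg_one_pow_congr' (a := n - k - d * r + (d + 1) * (M - r)) (b := k + M + 1 + r)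
      (by omega)]
    rw [pow_add, mul_assoc]
  rw [Finset.sum_congr rfl h5, ← Finset.mul_sum]
  obtain ⟨M', rfl⟩ : ∃ M', M = M' + 1 := ⟨M - 1, by omega⟩
  rw [alt_partial_sum M' T]
  have hq := Nat.div_add_mod k d
  set q : ℕ := k / d with hqdef
  set s' : ℕ := k % d with hs'def
  have hs' : s' < d := Nat.mod_lt _ hd0
  have hqM : q < M' + 1 := Nat.lt_of_mul_lt_mul_left (a := d) (by omega)
  have hT : T = M' - q := by
    have e2 : d * ((M' - q) + q + 1) = d * (M' + 1) := by congr 1; omega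
    rw [mul_add, mul_add, mul_one] at e2
    have e3 : n - k = d * (M' - q) + (d - 1 - s') := by omega
    rw [hTdef, e3, Nat.mul_add_div hd0, Nat.div_eq_of_lt (by omega), add_zero]
  have hqM' : q ≤ M' := by omega
  rw [hT, Nat.choose_symm hqM']
  rw [show M' + 1 - 1 = M' from rfl]
  rw [← mul_assoc, ← pow_add]
  congr 1
  apply neg_one_pow_congr'
  omega

lemma rou_filter {m : ℕ} (hm : 0 < m) {ω : ℂ} (hω : IsPrimitiveRoot ω m) (t : ℕ) :
    ∑ j ∈ range m, ω ^ (j * t) = if m ∣ t then (m : ℂ) else 0 := by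
  have hsum : ∑ j ∈ range m, ω ^ (j * t) = ∑ j ∈ range m, (ω ^ t) ^ j := by
    refine Finset.sum_congr rfl fun j _ => ?_
    rw [← pow_mul, mul_comm]
  rw [hsum]
  by_cases h : m ∣ t
  · rw [if_pos h]
    obtain ⟨u, rfl⟩ := h
    simp [pow_mul, hω.pow_eq_one]
  · rw [if_neg h]
    have hne : ω ^ t ≠ 1 := fun hh => h ((hω.pow_eq_one_iff_dvd t).mp hh)
    rw [geom_sum_eq hne]
    have : (ω ^ t) ^ m = 1 := by rw [← pow_mul, mul_comm, pow_mul, hω.pow_eq_one, one_pow]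
    rw [this, sub_self, zero_div]

lemma zmod_cond_iff {m σ b : ℕ} (hm : 0 < m) (hb : b < m) :
    ((σ : ZMod m) = (b : ZMod m)) ↔ m ∣ σ + (m - b) := by
  rw [ZMod.natCast_eq_natCast_iff]
  constructor
  · intro h
    have h2 : σ + (m - b) ≡ b + (m - b) [MOD m] := h.add_right _
    rw [show b + (m - b) = m by omega] at h2
    have h3 : σ + (m - b) ≡ 0 [MOD m] := h2.trans (Nat.modEq_zero_iff_dvd.mpr dvd_rfl)
    exact (Nat.modEq_zero_iff_dvd).mp h3
  · intro h
    have h2 : σ + (m - b) ≡ 0 [MOD m] := (Nat.modEq_zero_iff_dvd).mpr h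
    have h3 : (0 : ℕ) ≡ m [MOD m] := (Nat.modEq_zero_iff_dvd.mpr dvd_rfl).symm
    have h4 : σ + (m - b) ≡ b + (m - b) [MOD m] := by
      refine h2.trans (h3.trans ?_)
      rw [show b + (m - b) = m by omega]
    exact h4.add_right_cancel' _

lemma fin2_eq_zero_or_one (v : Fin 2) : v = 0 ∨ v = 1 := by omega

lemma sum_weight {n k : ℕ} (ζ : ℂ) :
    ∑ y ∈ (univ : Finset (Fin n → Fin 2)).filter
        (fun y => (univ.filter (fun i => y i = 1)).card = k),
      ζ ^ (∑ i : Fin n, ((i : ℕ) + 1) * (y i : ℕ)) =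
    ∑ A ∈ powersetCard k (univ : Finset (Fin n)), ∏ i ∈ A, ζ ^ ((i : ℕ) + 1) := by
  refine Finset.sum_nbij' (i := fun y => univ.filter (fun i => y i = 1))
    (j := fun A => fun i => if i ∈ A then 1 else 0) ?_ ?_ ?_ ?_ ?_
  · intro y hy
    rw [Finset.mem_filter] at hy
    rw [Finset.mem_powersetCard_univ]
    exact hy.2
  · intro A hA
    rw [Finset.mem_powersetCard_univ] at hA
    rw [Finset.mem_filter]
    refine ⟨Finset.mem_univ _, ?_⟩
    rw [← hA]
    congr 1
    ext i
    simp only [Finset.mem_filter, Finset.mem_univ, true_and]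
    constructor
    · intro h
      by_contra hne
      rw [if_neg hne] at h
      exact absurd h (by decide)
    · intro h
      rw [if_pos h]
  · intro y hy
    funext i
    rcases fin2_eq_zero_or_one (y i) with h | h
    · rw [h]
      simp [h]
    · rw [h]
      simp [h]
  · intro A hA
    ext i
    simp only [Finset.mem_filter, Finset.mem_univ, true_and]
    constructor
    · intro h
      by_contra hne
      rw [if_neg hne] at h
      exact absurd h (by decide)
    · intro h
      rw [if_pos h]
  · intro y hy
    have hσ : ∑ i : Fin n, ((i : ℕ) + 1) * (y i : ℕ) =
        ∑ i ∈ univ.filter (fun i => y i = 1), ((i : ℕ) + 1) := by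
      rw [Finset.sum_filter]
      refine Finset.sum_congr rfl fun i _ => ?_
      rcases fin2_eq_zero_or_one (y i) with h | h
      · rw [h]; simp [h, (by decide : (0 : Fin 2) ≠ 1)]
      · rw [h]; simp
    rw [hσ, ← Finset.prod_pow_eq_pow_sum]

lemma gcd_sub_eq {j d : ℕ} (h : j ≤ d) : Nat.gcd (d - j) d = Nat.gcd j d := by
  have h1 : Nat.gcd (d - j) d = Nat.gcd (d - j) (j + (d - j)) := by
    congr 1
    omega
  rw [h1, Nat.gcd_add_self_right, Nat.gcd_comm, Nat.gcd_sub_self_right h]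

lemma fiber_ramanujan {m d : ℕ} (hm : 0 < m) (hd : d ∣ m) (hd0 : 0 < d) {b : ℕ} (hb : b ≤ m) :
    ∑ j ∈ (range m).filter (fun j => m / Nat.gcd j m = d),
      Complex.exp (2 * Real.pi * Complex.I / (m : ℂ)) ^ (j * (m - b)) = ramanujanSum d b := by
  set e : ℕ := m / d with hedef
  have he : d * e = m := Nat.mul_div_cancel' hd
  have he0 : 0 < e := Nat.div_pos (Nat.le_of_dvd hm hd) hd0
  have hset : (range m).filter (fun j => m / Nat.gcd j m = d) =
      ((range d).filter (fun j' => Nat.gcd j' d = 1)).image (fun j' => e * j') := by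
    ext j
    simp only [Finset.mem_filter, Finset.mem_range, Finset.mem_image]
    constructor
    · rintro ⟨hj, hgcd⟩
      have hgd : Nat.gcd j m ∣ m := Nat.gcd_dvd_right j m
      have h2 : Nat.gcd j m * d = m := by
        have h' := Nat.mul_div_cancel' hgd
        rw [hgcd] at h'
        exact h'
      have hge : Nat.gcd j m = e := by
        refine Nat.eq_of_mul_eq_mul_right hd0 ?_
        rw [h2, ← he, mul_comm]
      have hej : e ∣ j := hge ▸ Nat.gcd_dvd_left j m
      refine ⟨j / e, ⟨?_, ?_⟩, Nat.mul_div_cancel' hej⟩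
      · refine Nat.lt_of_mul_lt_mul_left (a := e) ?_
        rw [Nat.mul_div_cancel' hej]
        calc j < m := hj
          _ = e * d := by rw [← he, mul_comm]
      · have h3 : e * Nat.gcd (j / e) d = Nat.gcd (e * (j / e)) (e * d) :=
          (Nat.gcd_mul_left e _ d).symm
        rw [Nat.mul_div_cancel' hej, show e * d = m by rw [← he, mul_comm], hge] at h3
        exact Nat.eq_of_mul_eq_mul_left he0 (by rw [mul_one]; exact h3)
    · rintro ⟨u, ⟨hu, hgcd⟩, rfl⟩
      constructor
      · calc e * u < e * d := (Nat.mul_lt_mul_left he0).mpr hu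
          _ = m := by rw [mul_comm]; exact he
      · have h3 : Nat.gcd (e * u) m = e := by
          rw [← he, mul_comm d e, Nat.gcd_mul_left, hgcd, mul_one]
        rw [h3, hedef, Nat.div_div_self hd hm.ne']
  rw [hset, Finset.sum_image (fun a _ c _ h => Nat.eq_of_mul_eq_mul_left he0 h)]
  rw [ramanujanSum]
  refine Finset.sum_nbij' (i := fun j' => d - j') (j := fun j => d - j) ?_ ?_ ?_ ?_ ?_
  · intro j' hj'
    rw [Finset.mem_filter, Finset.mem_range] at hj'
    rw [Finset.mem_filter, Finset.mem_Icc]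
    exact ⟨⟨by omega, by omega⟩, by rw [gcd_sub_eq (by omega)]; exact hj'.2⟩
  · intro j hj
    rw [Finset.mem_filter, Finset.mem_Icc] at hj
    rw [Finset.mem_filter, Finset.mem_range]
    refine ⟨by omega, ?_⟩
    rw [gcd_sub_eq (by omega)]
    exact hj.2
  · intro j' hj'
    rw [Finset.mem_filter, Finset.mem_range] at hj'
    omega
  · intro j hj
    rw [Finset.mem_filter, Finset.mem_Icc] at hj
    omega
  · intro j' hj'
    rw [Finset.mem_filter, Finset.mem_range] at hj'
    rw [← Complex.exp_nat_mul]
    rw [Complex.exp_eq_exp_iff_exists_int]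
    refine ⟨(j' : ℤ) * e - b, ?_⟩
    have hj'd : j' ≤ d := hj'.1.le
    have hmd : (d : ℂ) * e = m := by exact_mod_cast congrArg (Nat.cast : ℕ → ℂ) he
    have hd0' : (d : ℂ) ≠ 0 := Nat.cast_ne_zero.mpr hd0.ne'
    have hm0' : (m : ℂ) ≠ 0 := Nat.cast_ne_zero.mpr hm.ne'
    push_cast [Nat.cast_sub hb, Nat.cast_sub hj'd]
    field_simp
    ring_nf
    linear_combination (-((j' : ℂ) * (b : ℂ))) * hmd

lemma pow_gcd_primitiveRoot {m : ℕ} (hm : 0 < m) {ω : ℂ} (hω : IsPrimitiveRoot ω m) (j : ℕ) :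
    IsPrimitiveRoot (ω ^ j) (m / Nat.gcd j m) := by
  have hg0 : 0 < Nat.gcd j m := Nat.gcd_pos_of_pos_right _ hm
  have h1 : IsPrimitiveRoot (ω ^ Nat.gcd j m) (m / Nat.gcd j m) :=
    hω.pow hm (Nat.mul_div_cancel' (Nat.gcd_dvd_right j m)).symm
  have h2 := h1.pow_of_coprime (j / Nat.gcd j m) (Nat.coprime_div_gcd_div_gcd hg0)
  rwa [← pow_mul, Nat.mul_div_cancel' (Nat.gcd_dvd_left j m)] at h2

/-- The number of codewords of the Varshamov–Tenengolts code `VT_b(n)` with Hamming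
weight `k` is `((−1)^k/(n+1)) · ∑_{d ∣ n+1} (−1)^{⌊k/d⌋} c_d(b) C((n+1)/d − 1, ⌊k/d⌋)`. -/
theorem card_varshamovTenengolts_weight (n : ℕ) (hn : 0 < n) (b : ℕ) (hb : b ≤ n) (k : ℕ) :
    (Nat.card {y : Fin n → Fin 2 //
        ((∑ i : Fin n, ((i : ℕ) + 1) * (y i : ℕ) : ℕ) : ZMod (n + 1)) = (b : ZMod (n + 1)) ∧
        (Finset.univ.filter (fun i => y i = 1)).card = k} : ℂ) =
      (-1 : ℂ) ^ k / ((n : ℂ) + 1) *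
        ∑ d ∈ (n + 1).divisors,
          (-1 : ℂ) ^ (k / d) * ramanujanSum d b * (((n + 1) / d - 1).choose (k / d) : ℂ) := by
  have hm0 : 0 < n + 1 := Nat.succ_pos n
  by_cases hk : k ≤ n
  case neg =>
    have hL : Nat.card {y : Fin n → Fin 2 //
        ((∑ i : Fin n, ((i : ℕ) + 1) * (y i : ℕ) : ℕ) : ZMod (n + 1)) = (b : ZMod (n + 1)) ∧
        (Finset.univ.filter (fun i => y i = 1)).card = k} = 0 := by
      rw [Nat.card_eq_zero]
      left
      refine ⟨fun y => ?_⟩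
      obtain ⟨y, _, hy2⟩ := y
      have : (Finset.univ.filter (fun i => y i = 1)).card ≤ n := by
        calc (Finset.univ.filter (fun i => y i = 1)).card ≤ (univ : Finset (Fin n)).card :=
          Finset.card_filter_le _ _
        _ = n := by simp
      omega
    rw [hL]
    clear hL
    have hsum0 : ∀ d ∈ (n + 1).divisors,
        (-1 : ℂ) ^ (k / d) * ramanujanSum d b * (((n + 1) / d - 1).choose (k / d) : ℂ) = 0 := by
      intro d hd
      obtain ⟨hdvd, hne⟩ := Nat.mem_divisors.mp hd
      have hd0 : 0 < d := Nat.pos_of_dvd_of_pos hdvd hm0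
      have hM0 : 0 < (n + 1) / d := Nat.div_pos (Nat.le_of_dvd hm0 hdvd) hd0
      have hch : ((n + 1) / d - 1).choose (k / d) = 0 := by
        apply Nat.choose_eq_zero_of_lt
        have : (n + 1) / d ≤ k / d := Nat.div_le_div_right (show n + 1 ≤ k by omega)
        omega
      rw [hch]
      simp
    rw [Finset.sum_congr rfl hsum0]
    simp
  case pos =>
    set ω : ℂ := Complex.exp (2 * Real.pi * Complex.I / ((n + 1 : ℕ) : ℂ)) with hωdef
    have hω : IsPrimitiveRoot ω (n + 1) := Complex.isPrimitiveRoot_exp (n + 1) hm0.ne'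
    have hcast : (Nat.card {y : Fin n → Fin 2 //
        ((∑ i : Fin n, ((i : ℕ) + 1) * (y i : ℕ) : ℕ) : ZMod (n + 1)) = (b : ZMod (n + 1)) ∧
        (Finset.univ.filter (fun i => y i = 1)).card = k} : ℂ) =
        ∑ y ∈ (univ : Finset (Fin n → Fin 2)),
          if ((∑ i : Fin n, ((i : ℕ) + 1) * (y i : ℕ) : ℕ) : ZMod (n + 1)) = (b : ZMod (n + 1)) ∧
              (Finset.univ.filter (fun i => y i = 1)).card = k then (1 : ℂ) else 0 := by
      rw [Finset.sum_boole, Nat.card_eq_fintype_card, Fintype.card_subtype]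
    rw [hcast]
    have hstep : ∀ y : Fin n → Fin 2,
        (if ((∑ i : Fin n, ((i : ℕ) + 1) * (y i : ℕ) : ℕ) : ZMod (n + 1)) = (b : ZMod (n + 1)) ∧
            (Finset.univ.filter (fun i => y i = 1)).card = k then (1 : ℂ) else 0) =
        if (Finset.univ.filter (fun i => y i = 1)).card = k then
          (1 / ((n + 1 : ℕ) : ℂ)) * ∑ j ∈ range (n + 1),
            ω ^ (j * ((∑ i : Fin n, ((i : ℕ) + 1) * (y i : ℕ)) + (n + 1 - b))) else 0 := by
      intro y
      rw [rou_filter hm0 hω]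
      by_cases h2 : (Finset.univ.filter (fun i => y i = 1)).card = k
      · by_cases h1 : ((∑ i : Fin n, ((i : ℕ) + 1) * (y i : ℕ) : ℕ) : ZMod (n + 1)) =
            (b : ZMod (n + 1))
        · rw [if_pos ⟨h1, h2⟩, if_pos h2, if_pos ((zmod_cond_iff hm0 (by omega)).mp h1)]
          exact (one_div_mul_cancel (Nat.cast_ne_zero.mpr hm0.ne' :
            ((n + 1 : ℕ) : ℂ) ≠ 0)).symm
        · rw [if_neg (fun hc => h1 hc.1), if_pos h2,
            if_neg (fun hc => h1 ((zmod_cond_iff hm0 (by omega)).mpr hc))]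
          ring
      · rw [if_neg (fun hc => h2 hc.2), if_neg h2]
    rw [Finset.sum_congr rfl (fun y _ => hstep y)]
    have hswap : ∑ y ∈ (univ : Finset (Fin n → Fin 2)),
        (if (Finset.univ.filter (fun i => y i = 1)).card = k then
          (1 / ((n + 1 : ℕ) : ℂ)) * ∑ j ∈ range (n + 1),
            ω ^ (j * ((∑ i : Fin n, ((i : ℕ) + 1) * (y i : ℕ)) + (n + 1 - b))) else 0) =
        (1 / ((n + 1 : ℕ) : ℂ)) * ∑ j ∈ range (n + 1),
          ∑ y ∈ (univ : Finset (Fin n → Fin 2)),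
            (if (Finset.univ.filter (fun i => y i = 1)).card = k then
              ω ^ (j * ((∑ i : Fin n, ((i : ℕ) + 1) * (y i : ℕ)) + (n + 1 - b))) else 0) := by
      calc ∑ y ∈ (univ : Finset (Fin n → Fin 2)),
            (if (Finset.univ.filter (fun i => y i = 1)).card = k then
              (1 / ((n + 1 : ℕ) : ℂ)) * ∑ j ∈ range (n + 1),
                ω ^ (j * ((∑ i : Fin n, ((i : ℕ) + 1) * (y i : ℕ)) + (n + 1 - b))) else 0)
          = ∑ y ∈ (univ : Finset (Fin n → Fin 2)), ∑ j ∈ range (n + 1),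
              (1 / ((n + 1 : ℕ) : ℂ)) *
                (if (Finset.univ.filter (fun i => y i = 1)).card = k then
                  ω ^ (j * ((∑ i : Fin n, ((i : ℕ) + 1) * (y i : ℕ)) + (n + 1 - b))) else 0) := by
            refine Finset.sum_congr rfl fun y _ => ?_
            by_cases h2 : (Finset.univ.filter (fun i => y i = 1)).card = k
            · rw [if_pos h2, Finset.mul_sum]
              exact Finset.sum_congr rfl fun j _ => by rw [if_pos h2]
            · rw [if_neg h2]
              simp [if_neg h2]
        _ = ∑ j ∈ range (n + 1), ∑ y ∈ (univ : Finset (Fin n → Fin 2)),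
              (1 / ((n + 1 : ℕ) : ℂ)) *
                (if (Finset.univ.filter (fun i => y i = 1)).card = k then
                  ω ^ (j * ((∑ i : Fin n, ((i : ℕ) + 1) * (y i : ℕ)) + (n + 1 - b))) else 0) :=
            Finset.sum_comm
        _ = (1 / ((n + 1 : ℕ) : ℂ)) * ∑ j ∈ range (n + 1),
              ∑ y ∈ (univ : Finset (Fin n → Fin 2)),
                (if (Finset.univ.filter (fun i => y i = 1)).card = k then
                  ω ^ (j * ((∑ i : Fin n, ((i : ℕ) + 1) * (y i : ℕ)) + (n + 1 - b))) else 0) := by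
            rw [Finset.mul_sum]
            exact Finset.sum_congr rfl fun j _ => (Finset.mul_sum _ _ _).symm
    rw [hswap]
    have hinner : ∀ j ∈ range (n + 1),
        ∑ y ∈ (univ : Finset (Fin n → Fin 2)),
          (if (Finset.univ.filter (fun i => y i = 1)).card = k then
            ω ^ (j * ((∑ i : Fin n, ((i : ℕ) + 1) * (y i : ℕ)) + (n + 1 - b))) else 0) =
        ω ^ (j * (n + 1 - b)) *
          ((-1 : ℂ) ^ (k + k / ((n + 1) / Nat.gcd j (n + 1))) *
            (((n + 1) / ((n + 1) / Nat.gcd j (n + 1)) - 1).choose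
              (k / ((n + 1) / Nat.gcd j (n + 1))) : ℂ)) := by
      intro j _
      calc ∑ y ∈ (univ : Finset (Fin n → Fin 2)),
            (if (Finset.univ.filter (fun i => y i = 1)).card = k then
              ω ^ (j * ((∑ i : Fin n, ((i : ℕ) + 1) * (y i : ℕ)) + (n + 1 - b))) else 0)
          = ∑ y ∈ (univ : Finset (Fin n → Fin 2)).filter
                (fun y => (Finset.univ.filter (fun i => y i = 1)).card = k),
              ω ^ (j * ((∑ i : Fin n, ((i : ℕ) + 1) * (y i : ℕ)) + (n + 1 - b))) := by
            rw [Finset.sum_filter]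
        _ = ω ^ (j * (n + 1 - b)) * ∑ y ∈ (univ : Finset (Fin n → Fin 2)).filter
                (fun y => (Finset.univ.filter (fun i => y i = 1)).card = k),
              (ω ^ j) ^ (∑ i : Fin n, ((i : ℕ) + 1) * (y i : ℕ)) := by
            rw [Finset.mul_sum]
            refine Finset.sum_congr rfl fun y _ => ?_
            rw [← pow_mul, ← pow_add]
            congr 1
            ring
        _ = ω ^ (j * (n + 1 - b)) *
              ((-1 : ℂ) ^ (k + k / ((n + 1) / Nat.gcd j (n + 1))) *
                (((n + 1) / ((n + 1) / Nat.gcd j (n + 1)) - 1).choose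
                  (k / ((n + 1) / Nat.gcd j (n + 1))) : ℂ)) := by
            congr 1
            rw [sum_weight (ω ^ j)]
            exact esymm_rou hk (pow_gcd_primitiveRoot hm0 hω j)
              (Nat.div_dvd_of_dvd (Nat.gcd_dvd_right j (n + 1)))
    rw [Finset.sum_congr rfl hinner]
    have hmaps : ∀ j ∈ range (n + 1), (n + 1) / Nat.gcd j (n + 1) ∈ (n + 1).divisors :=
      fun j _ => Nat.mem_divisors.mpr
        ⟨Nat.div_dvd_of_dvd (Nat.gcd_dvd_right j (n + 1)), hm0.ne'⟩
    rw [← Finset.sum_fiberwise_of_maps_to hmaps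
      (fun j => ω ^ (j * (n + 1 - b)) *
        ((-1 : ℂ) ^ (k + k / ((n + 1) / Nat.gcd j (n + 1))) *
          (((n + 1) / ((n + 1) / Nat.gcd j (n + 1)) - 1).choose
            (k / ((n + 1) / Nat.gcd j (n + 1))) : ℂ)))]
    have hfiber : ∀ d ∈ (n + 1).divisors,
        ∑ j ∈ (range (n + 1)).filter (fun j => (n + 1) / Nat.gcd j (n + 1) = d),
          ω ^ (j * (n + 1 - b)) *
            ((-1 : ℂ) ^ (k + k / ((n + 1) / Nat.gcd j (n + 1))) *
              (((n + 1) / ((n + 1) / Nat.gcd j (n + 1)) - 1).choose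
                (k / ((n + 1) / Nat.gcd j (n + 1))) : ℂ)) =
        ((-1 : ℂ) ^ (k + k / d) * (((n + 1) / d - 1).choose (k / d) : ℂ)) *
          ramanujanSum d b := by
      intro d hd
      obtain ⟨hdvd, _⟩ := Nat.mem_divisors.mp hd
      have hd0 : 0 < d := Nat.pos_of_dvd_of_pos hdvd hm0
      have h1 : ∀ j ∈ (range (n + 1)).filter (fun j => (n + 1) / Nat.gcd j (n + 1) = d),
          ω ^ (j * (n + 1 - b)) *
            ((-1 : ℂ) ^ (k + k / ((n + 1) / Nat.gcd j (n + 1))) *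
              (((n + 1) / ((n + 1) / Nat.gcd j (n + 1)) - 1).choose
                (k / ((n + 1) / Nat.gcd j (n + 1))) : ℂ)) =
          ((-1 : ℂ) ^ (k + k / d) * (((n + 1) / d - 1).choose (k / d) : ℂ)) *
            ω ^ (j * (n + 1 - b)) := by
        intro j hj
        rw [Finset.mem_filter] at hj
        rw [hj.2, mul_comm]
      rw [Finset.sum_congr rfl h1, ← Finset.mul_sum]
      congr 1
      rw [hωdef]
      exact fiber_ramanujan hm0 hdvd hd0 (by omega)
    rw [Finset.sum_congr rfl hfiber]
    rw [Finset.mul_sum, Finset.mul_sum]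
    refine Finset.sum_congr rfl fun d hd => ?_
    have hmC : ((n + 1 : ℕ) : ℂ) = (n : ℂ) + 1 := by push_cast; ring
    rw [hmC, pow_add]
    ring
end
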